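/- arXiv:2205.13065 — 6 statements merged into one kernel-verified Lean document; each statement's English description precedes it below -/
import Mathlib

section
/- Let a, b, c be integers with a + b + c ≢ 0 (mod 3), and let (α, β, γ) = a(−1,2,2) + b(2,−1,2) + c(2,2,−1). Then α ≡ β ≡ γ ≡ −(α+β+γ)/3 ≢ 0 (mod 3); in particular (α+β+γ)/3 is an integer not divisible by 3 and congruent to −α mod 3. Conversely, if integers α, β, γ satisfy α ≡ β ≡ γ ≡ −(α+β+γ)/3 ≢ 0 (mod 3), then the unique reals a, b, c with (α,β,γ) = a(−1,2,2)+b(2,−1,2)+c(2,2,−1) are integers satisfying a + b + c ≢ 0 (mod 3). -/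
/-- For integers `a, b, c` with `a+b+c ≢ 0 (mod 3)`, the vector
`(α,β,γ) = a(−1,2,2) + b(2,−1,2) + c(2,2,−1)` satisfies
`α ≡ β ≡ γ ≡ −(α+β+γ)/3 ≢ 0 (mod 3)` (and `α+β+γ = 3(a+b+c)`).
Conversely, if integers `α, β, γ` satisfy these congruences, then the unique
solution `a, b, c` of the linear system consists of integers with
`a + b + c ≢ 0 (mod 3)`. -/
theorem stmt_4 :
    (∀ a b c : ℤ, ¬ (3 ∣ a + b + c) →
      (-a + 2*b + 2*c) + (2*a - b + 2*c) + (2*a + 2*b - c) = 3 * (a + b + c) ∧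
      (-a + 2*b + 2*c) ≡ (2*a - b + 2*c) [ZMOD 3] ∧
      (2*a - b + 2*c) ≡ (2*a + 2*b - c) [ZMOD 3] ∧
      (-a + 2*b + 2*c) ≡ -(a + b + c) [ZMOD 3] ∧
      ¬ (3 ∣ a + b + c)) ∧
    (∀ α β γ : ℤ, 3 ∣ α + β + γ →
      α ≡ β [ZMOD 3] → β ≡ γ [ZMOD 3] →
      α ≡ -((α + β + γ) / 3) [ZMOD 3] → ¬ (3 ∣ (α + β + γ) / 3) →
      ∃ a b c : ℤ, α = -a + 2*b + 2*c ∧ β = 2*a - b + 2*c ∧ γ = 2*a + 2*b - c ∧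
        ¬ (3 ∣ a + b + c)) := by
  constructor
  · intro a b c h
    refine ⟨by ring, ?_, ?_, ?_, h⟩ <;> · simp only [Int.ModEq]; omega
  · intro α β γ hs h1 h2 h3 h4
    simp only [Int.ModEq] at h1 h2 h3
    obtain ⟨t, ht⟩ := hs
    have ht3 : (α + β + γ) / 3 = t := by omega
    rw [ht3] at h3 h4
    -- α = 3u - t, etc.
    have hu : ∃ u, α = 3*u - t := ⟨(α + t)/3, by omega⟩
    obtain ⟨u, hu⟩ := hu
    have hv : ∃ v, β = 3*v - t := ⟨(β + t)/3, by omega⟩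
    obtain ⟨v, hv⟩ := hv
    have hw : ∃ w, γ = 3*w - t := ⟨(γ + t)/3, by omega⟩
    obtain ⟨w, hw⟩ := hw
    refine ⟨t - u, t - v, t - w, by omega, by omega, by omega, ?_⟩
    have : (t - u) + (t - v) + (t - w) = t := by omega
    rw [this]; omega
end

section
/- Let D_S' = {(0,0,0), (1,0,0), (0,1,0), (0,0,1)} ⊂ ℤ³ and Δ(D_S') = D_S' − D_S'. Define B = {(2^n x, 2^n y, 2^n z) : n ≥ 0, x, y, z all odd integers} and C = ℤ³ \ B. Then the radix expansion set E(2, Δ(D_S')) = ⋃_{t≥1} { ∑_{j=0}^{t−1} 2^j d_j : d_j ∈ Δ(D_S') } equals C. -/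
/-- The digit set `D_S' = {0, e₁, e₂, e₃} ⊆ ℤ³`. -/
def DSdig : Set (ℤ × ℤ × ℤ) := {(0,0,0), (1,0,0), (0,1,0), (0,0,1)}

/-- Differenced digit set `Δ(D) = D - D` in `ℤ³`. -/
def deltaZ (D : Set (ℤ × ℤ × ℤ)) : Set (ℤ × ℤ × ℤ) :=
  {p | ∃ x ∈ D, ∃ y ∈ D, p = x - y}

/-- Radix expansion set `E(k,D) = ⋃_{t≥1} {∑_{j<t} k^j d_j : d_j ∈ D}` in `ℤ³`. -/
def ExpZ (k : ℤ) (D : Set (ℤ × ℤ × ℤ)) : Set (ℤ × ℤ × ℤ) :=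
  {x | ∃ t : ℕ, 1 ≤ t ∧ ∃ d : ℕ → ℤ × ℤ × ℤ, (∀ j < t, d j ∈ D) ∧
        x = ∑ j ∈ Finset.range t, k ^ j • d j}

/-- `B = {2ⁿ·(x,y,z) : n ≥ 0, x, y, z odd}`. -/
def Bset : Set (ℤ × ℤ × ℤ) :=
  {p | ∃ (n : ℕ) (x y z : ℤ), Odd x ∧ Odd y ∧ Odd z ∧
        p = (2 ^ n * x, 2 ^ n * y, 2 ^ n * z)}

/-! ### Auxiliary lemmas -/

lemma delta_parity {d : ℤ × ℤ × ℤ} (hd : d ∈ deltaZ DSdig) :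
    ¬(d.1 % 2 = 1 ∧ d.2.1 % 2 = 1 ∧ d.2.2 % 2 = 1) ∧
    (d.1 % 2 = 0 → d.2.1 % 2 = 0 → d.2.2 % 2 = 0 → d = 0) := by
  obtain ⟨a, ha, b, hb, rfl⟩ := hd
  simp only [DSdig, Set.mem_insert_iff, Set.mem_singleton_iff] at ha hb
  rcases ha with rfl | rfl | rfl | rfl <;> rcases hb with rfl | rfl | rfl | rfl <;> decide

lemma B_mod {p : ℤ × ℤ × ℤ} (h : p ∈ Bset) :
    p.1 % 2 = p.2.1 % 2 ∧ p.2.1 % 2 = p.2.2 % 2 := by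
  obtain ⟨n, x, y, z, hx, hy, hz, hp⟩ := h
  subst hp
  cases n with
  | zero =>
      simp only [pow_zero, one_mul]
      rw [Int.odd_iff] at hx hy hz
      exact ⟨hx.trans hy.symm, hy.trans hz.symm⟩
  | succ m =>
      have h2 : ∀ w : ℤ, (2 ^ (m + 1) * w) % 2 = 0 := by
        intro w
        rw [pow_succ, mul_comm ((2:ℤ) ^ m) 2, mul_assoc]
        exact Int.mul_emod_right 2 _
      simp [h2]

lemma zero_not_B : ((0, 0, 0) : ℤ × ℤ × ℤ) ∉ Bset := by
  rintro ⟨n, x, y, z, hx, hy, hz, h⟩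
  rw [Prod.mk.injEq, Prod.mk.injEq] at h
  obtain ⟨h1, -, -⟩ := h
  have h2n : (2:ℤ) ^ n ≠ 0 := pow_ne_zero _ two_ne_zero
  rcases mul_eq_zero.mp h1.symm with h | h
  · exact h2n h
  · subst h
    simp [Int.not_odd_iff_even.mpr Even.zero] at hx

lemma B_of_odd {p : ℤ × ℤ × ℤ} (h1 : Odd p.1) (h2 : Odd p.2.1) (h3 : Odd p.2.2) :
    p ∈ Bset :=
  ⟨0, p.1, p.2.1, p.2.2, h1, h2, h3, by simp⟩

lemma notB_add {q : ℤ × ℤ × ℤ} (h : q ∈ Bset) (u v w : ℤ)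
    (hm : ¬(u % 2 = v % 2 ∧ v % 2 = w % 2)) :
    ((q.1 + u, q.2.1 + v, q.2.2 + w) : ℤ × ℤ × ℤ) ∉ Bset := by
  intro h'
  have h1 := B_mod h
  have h2 := B_mod h'
  dsimp only at h2
  omega

lemma B_double {x y z : ℤ} (h : ((x, y, z) : ℤ × ℤ × ℤ) ∈ Bset) :
    ((2 * x, 2 * y, 2 * z) : ℤ × ℤ × ℤ) ∈ Bset := by
  obtain ⟨n, a, b, c, ha, hb, hc, hq⟩ := h
  rw [Prod.mk.injEq, Prod.mk.injEq] at hq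
  obtain ⟨h1, h2, h3⟩ := hq
  exact ⟨n + 1, a, b, c, ha, hb, hc, by
    rw [Prod.mk.injEq, Prod.mk.injEq]
    refine ⟨?_, ?_, ?_⟩ <;> rw [pow_succ] <;> [rw [h1]; rw [h2]; rw [h3]] <;> ring⟩

lemma B_half {x y z : ℤ} (h : ((2 * x, 2 * y, 2 * z) : ℤ × ℤ × ℤ) ∈ Bset) :
    ((x, y, z) : ℤ × ℤ × ℤ) ∈ Bset := by
  obtain ⟨n, a, b, c, ha, hb, hc, hq⟩ := h
  rw [Prod.mk.injEq, Prod.mk.injEq] at hq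
  obtain ⟨h1, h2, h3⟩ := hq
  cases n with
  | zero =>
      rw [Int.odd_iff] at ha
      simp only [pow_zero, one_mul] at h1
      omega
  | succ m =>
      rw [pow_succ, mul_comm ((2:ℤ) ^ m) 2, mul_assoc] at h1 h2 h3
      exact ⟨m, a, b, c, ha, hb, hc, by
        rw [Prod.mk.injEq, Prod.mk.injEq]
        exact ⟨mul_left_cancel₀ two_ne_zero h1, mul_left_cancel₀ two_ne_zero h2,
          mul_left_cancel₀ two_ne_zero h3⟩⟩

/-- If `d₀ ∈ Δ` and `S ∉ B`, then `d₀ + 2S ∉ B`. -/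
lemma cons_not_B {d0 S : ℤ × ℤ × ℤ} (hd0 : d0 ∈ deltaZ DSdig) (hS : S ∉ Bset) :
    d0 + (2:ℤ) • S ∉ Bset := by
  obtain ⟨s1, s2, s3⟩ := S
  obtain ⟨e1, e2, e3⟩ := d0
  intro hB
  simp only [Prod.mk_add_mk, Prod.smul_mk, smul_eq_mul] at hB
  have hm := B_mod hB
  dsimp only at hm
  have hp := delta_parity hd0
  dsimp only at hp
  have hz : e1 % 2 = 0 ∧ e2 % 2 = 0 ∧ e3 % 2 = 0 := by
    rcases hp with ⟨h1, -⟩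
    omega
  have h0 : ((e1, e2, e3) : ℤ × ℤ × ℤ) = 0 := hp.2 hz.1 hz.2.1 hz.2.2
  rw [Prod.ext_iff, Prod.ext_iff] at h0
  obtain ⟨rfl, rfl, rfl⟩ : e1 = 0 ∧ e2 = 0 ∧ e3 = 0 := by
    simpa using h0
  simp only [zero_add] at hB
  exact hS (B_half hB)

/-- No radix expansion lands in `B`. -/
lemma sum_not_B : ∀ (t : ℕ) (d : ℕ → ℤ × ℤ × ℤ), (∀ j < t, d j ∈ deltaZ DSdig) →
    (∑ j ∈ Finset.range t, (2:ℤ) ^ j • d j) ∉ Bset := by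
  intro t
  induction t with
  | zero =>
      intro d _
      rw [Finset.sum_range_zero]; exact zero_not_B
  | succ t ih =>
      intro d hd hB
      rw [Finset.sum_range_succ'] at hB
      have hrw : (∑ j ∈ Finset.range t, (2:ℤ) ^ (j + 1) • d (j + 1)) + (2:ℤ) ^ 0 • d 0
          = d 0 + (2:ℤ) • ∑ j ∈ Finset.range t, (2:ℤ) ^ j • d (j + 1) := by
        rw [pow_zero, one_smul, add_comm, Finset.smul_sum]
        congr 1
        refine Finset.sum_congr rfl fun i _ => ?_
        rw [← mul_smul, ← pow_succ']
      rw [hrw] at hB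
      exact cons_not_B (hd 0 (by omega))
        (ih (fun j => d (j + 1)) (fun j hj => hd (j + 1) (by omega))) hB

lemma ExpZ_zero : (0 : ℤ × ℤ × ℤ) ∈ ExpZ 2 (deltaZ DSdig) :=
  ⟨1, le_rfl, fun _ => 0,
    fun _ _ => ⟨(0,0,0), by simp [DSdig], (0,0,0), by simp [DSdig], by simp⟩, by simp⟩

lemma ExpZ_cons {d q : ℤ × ℤ × ℤ} (hd : d ∈ deltaZ DSdig)
    (hq : q ∈ ExpZ 2 (deltaZ DSdig)) : d + (2:ℤ) • q ∈ ExpZ 2 (deltaZ DSdig) := by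
  obtain ⟨t, ht, e, he, rfl⟩ := hq
  refine ⟨t + 1, by omega, fun j => if j = 0 then d else e (j - 1), fun j hj => ?_, ?_⟩
  · by_cases h : j = 0
    · simpa [h] using hd
    · simpa [h] using he (j - 1) (by omega)
  · rw [Finset.sum_range_succ']
    simp only [Nat.succ_ne_zero, if_false, if_pos rfl, Nat.add_sub_cancel, pow_zero, one_smul,
      Nat.add_eq_zero, and_false]
    rw [Finset.smul_sum, add_comm]
    congr 1
    exact Finset.sum_congr rfl fun i _ => by rw [← mul_smul, ← pow_succ']

/-- The key greedy step: any nonzero `p ∉ B` is `d + 2q` for a digit `d` and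
a strictly smaller `q ∉ B`. -/
lemma step (p1 p2 p3 : ℤ) (hp : ((p1, p2, p3) : ℤ × ℤ × ℤ) ∉ Bset)
    (h0 : ¬(p1 = 0 ∧ p2 = 0 ∧ p3 = 0)) :
    ∃ d ∈ deltaZ DSdig, ∃ q1 q2 q3 : ℤ,
      ((p1, p2, p3) : ℤ × ℤ × ℤ) = d + (2:ℤ) • (q1, q2, q3) ∧
      ((q1, q2, q3) : ℤ × ℤ × ℤ) ∉ Bset ∧
      q1.natAbs + q2.natAbs + q3.natAbs < p1.natAbs + p2.natAbs + p3.natAbs := by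
  rcases Int.even_or_odd p1 with ⟨a, ha⟩ | ⟨a, ha⟩ <;>
    rcases Int.even_or_odd p2 with ⟨b, hb⟩ | ⟨b, hb⟩ <;>
    rcases Int.even_or_odd p3 with ⟨c, hc⟩ | ⟨c, hc⟩
  -- case (even, even, even)
  · refine ⟨(0,0,0), ⟨(0,0,0), by simp [DSdig], (0,0,0), by simp [DSdig], by simp⟩,
      a, b, c, ?_, ?_, ?_⟩
    · simp only [Prod.mk_add_mk, Prod.smul_mk, smul_eq_mul, Prod.mk.injEq]
      omega
    · intro hB
      have := B_double hB
      have he : ((2*a, 2*b, 2*c) : ℤ × ℤ × ℤ) = (p1, p2, p3) := by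
        simp only [Prod.mk.injEq]; omega
      rw [he] at this
      exact hp this
    · omega
  -- case (even, even, odd)
  · rcases le_or_gt 0 c with hs | hs
    · by_cases hB : ((a, b, c) : ℤ × ℤ × ℤ) ∈ Bset
      · have hne : ¬(a = 0 ∧ b = 0 ∧ c = 0) := by
          rintro ⟨rfl, rfl, rfl⟩; exact zero_not_B hB
        refine ⟨(0,0,-1), ⟨(0,0,0), by simp [DSdig], (0,0,1), by simp [DSdig], by simp⟩,
          a, b, c + 1, ?_, ?_, ?_⟩
        · simp only [Prod.mk_add_mk, Prod.smul_mk, smul_eq_mul, Prod.mk.injEq]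
          omega
        · simpa using notB_add hB 0 0 1 (by decide)
        · omega
      · refine ⟨(0,0,1), ⟨(0,0,1), by simp [DSdig], (0,0,0), by simp [DSdig], by simp⟩,
          a, b, c, ?_, hB, ?_⟩
        · simp only [Prod.mk_add_mk, Prod.smul_mk, smul_eq_mul, Prod.mk.injEq]
          omega
        · omega
    · by_cases hB : ((a, b, c + 1) : ℤ × ℤ × ℤ) ∈ Bset
      · have hne : ¬(a = 0 ∧ b = 0 ∧ c + 1 = 0) := by
          rintro ⟨h1, h2, h3⟩; rw [h1, h2, h3] at hB; exact zero_not_B hB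
        refine ⟨(0,0,1), ⟨(0,0,1), by simp [DSdig], (0,0,0), by simp [DSdig], by simp⟩,
          a, b, c, ?_, ?_, ?_⟩
        · simp only [Prod.mk_add_mk, Prod.smul_mk, smul_eq_mul, Prod.mk.injEq]
          omega
        · simpa using notB_add hB 0 0 (-1) (by decide)
        · omega
      · refine ⟨(0,0,-1), ⟨(0,0,0), by simp [DSdig], (0,0,1), by simp [DSdig], by simp⟩,
          a, b, c + 1, ?_, hB, ?_⟩
        · simp only [Prod.mk_add_mk, Prod.smul_mk, smul_eq_mul, Prod.mk.injEq]
          omega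
        · omega
  -- case (even, odd, even)
  · rcases le_or_gt 0 b with hs | hs
    · by_cases hB : ((a, b, c) : ℤ × ℤ × ℤ) ∈ Bset
      · have hne : ¬(a = 0 ∧ b = 0 ∧ c = 0) := by
          rintro ⟨rfl, rfl, rfl⟩; exact zero_not_B hB
        refine ⟨(0,-1,0), ⟨(0,0,0), by simp [DSdig], (0,1,0), by simp [DSdig], by simp⟩,
          a, b + 1, c, ?_, ?_, ?_⟩
        · simp only [Prod.mk_add_mk, Prod.smul_mk, smul_eq_mul, Prod.mk.injEq]
          omega
        · simpa using notB_add hB 0 1 0 (by decide)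
        · omega
      · refine ⟨(0,1,0), ⟨(0,1,0), by simp [DSdig], (0,0,0), by simp [DSdig], by simp⟩,
          a, b, c, ?_, hB, ?_⟩
        · simp only [Prod.mk_add_mk, Prod.smul_mk, smul_eq_mul, Prod.mk.injEq]
          omega
        · omega
    · by_cases hB : ((a, b + 1, c) : ℤ × ℤ × ℤ) ∈ Bset
      · have hne : ¬(a = 0 ∧ b + 1 = 0 ∧ c = 0) := by
          rintro ⟨h1, h2, h3⟩; rw [h1, h2, h3] at hB; exact zero_not_B hB
        refine ⟨(0,1,0), ⟨(0,1,0), by simp [DSdig], (0,0,0), by simp [DSdig], by simp⟩,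
          a, b, c, ?_, ?_, ?_⟩
        · simp only [Prod.mk_add_mk, Prod.smul_mk, smul_eq_mul, Prod.mk.injEq]
          omega
        · simpa using notB_add hB 0 (-1) 0 (by decide)
        · omega
      · refine ⟨(0,-1,0), ⟨(0,0,0), by simp [DSdig], (0,1,0), by simp [DSdig], by simp⟩,
          a, b + 1, c, ?_, hB, ?_⟩
        · simp only [Prod.mk_add_mk, Prod.smul_mk, smul_eq_mul, Prod.mk.injEq]
          omega
        · omega
  -- case (even, odd, odd)
  · rcases le_or_gt 0 b with hs | hs
    · by_cases hB : ((a, b, c + 1) : ℤ × ℤ × ℤ) ∈ Bset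
      · have hne : ¬(a = 0 ∧ b = 0 ∧ c + 1 = 0) := by
          rintro ⟨h1, h2, h3⟩; rw [h1, h2, h3] at hB; exact zero_not_B hB
        refine ⟨(0,-1,1), ⟨(0,0,1), by simp [DSdig], (0,1,0), by simp [DSdig], by simp⟩,
          a, b + 1, c, ?_, ?_, ?_⟩
        · simp only [Prod.mk_add_mk, Prod.smul_mk, smul_eq_mul, Prod.mk.injEq]
          omega
        · simpa using notB_add hB 0 1 (-1) (by decide)
        · omega
      · refine ⟨(0,1,-1), ⟨(0,1,0), by simp [DSdig], (0,0,1), by simp [DSdig], by simp⟩,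
          a, b, c + 1, ?_, hB, ?_⟩
        · simp only [Prod.mk_add_mk, Prod.smul_mk, smul_eq_mul, Prod.mk.injEq]
          omega
        · omega
    · by_cases hB : ((a, b + 1, c) : ℤ × ℤ × ℤ) ∈ Bset
      · have hne : ¬(a = 0 ∧ b + 1 = 0 ∧ c = 0) := by
          rintro ⟨h1, h2, h3⟩; rw [h1, h2, h3] at hB; exact zero_not_B hB
        refine ⟨(0,1,-1), ⟨(0,1,0), by simp [DSdig], (0,0,1), by simp [DSdig], by simp⟩,
          a, b, c + 1, ?_, ?_, ?_⟩
        · simp only [Prod.mk_add_mk, Prod.smul_mk, smul_eq_mul, Prod.mk.injEq]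
          omega
        · simpa using notB_add hB 0 (-1) 1 (by decide)
        · omega
      · refine ⟨(0,-1,1), ⟨(0,0,1), by simp [DSdig], (0,1,0), by simp [DSdig], by simp⟩,
          a, b + 1, c, ?_, hB, ?_⟩
        · simp only [Prod.mk_add_mk, Prod.smul_mk, smul_eq_mul, Prod.mk.injEq]
          omega
        · omega
  -- case (odd, even, even)
  · rcases le_or_gt 0 a with hs | hs
    · by_cases hB : ((a, b, c) : ℤ × ℤ × ℤ) ∈ Bset
      · have hne : ¬(a = 0 ∧ b = 0 ∧ c = 0) := by
          rintro ⟨rfl, rfl, rfl⟩; exact zero_not_B hB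
        refine ⟨(-1,0,0), ⟨(0,0,0), by simp [DSdig], (1,0,0), by simp [DSdig], by simp⟩,
          a + 1, b, c, ?_, ?_, ?_⟩
        · simp only [Prod.mk_add_mk, Prod.smul_mk, smul_eq_mul, Prod.mk.injEq]
          omega
        · simpa using notB_add hB 1 0 0 (by decide)
        · omega
      · refine ⟨(1,0,0), ⟨(1,0,0), by simp [DSdig], (0,0,0), by simp [DSdig], by simp⟩,
          a, b, c, ?_, hB, ?_⟩
        · simp only [Prod.mk_add_mk, Prod.smul_mk, smul_eq_mul, Prod.mk.injEq]
          omega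
        · omega
    · by_cases hB : ((a + 1, b, c) : ℤ × ℤ × ℤ) ∈ Bset
      · have hne : ¬(a + 1 = 0 ∧ b = 0 ∧ c = 0) := by
          rintro ⟨h1, h2, h3⟩; rw [h1, h2, h3] at hB; exact zero_not_B hB
        refine ⟨(1,0,0), ⟨(1,0,0), by simp [DSdig], (0,0,0), by simp [DSdig], by simp⟩,
          a, b, c, ?_, ?_, ?_⟩
        · simp only [Prod.mk_add_mk, Prod.smul_mk, smul_eq_mul, Prod.mk.injEq]
          omega
        · simpa using notB_add hB (-1) 0 0 (by decide)
        · omega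
      · refine ⟨(-1,0,0), ⟨(0,0,0), by simp [DSdig], (1,0,0), by simp [DSdig], by simp⟩,
          a + 1, b, c, ?_, hB, ?_⟩
        · simp only [Prod.mk_add_mk, Prod.smul_mk, smul_eq_mul, Prod.mk.injEq]
          omega
        · omega
  -- case (odd, even, odd)
  · rcases le_or_gt 0 a with hs | hs
    · by_cases hB : ((a, b, c + 1) : ℤ × ℤ × ℤ) ∈ Bset
      · have hne : ¬(a = 0 ∧ b = 0 ∧ c + 1 = 0) := by
          rintro ⟨h1, h2, h3⟩; rw [h1, h2, h3] at hB; exact zero_not_B hB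
        refine ⟨(-1,0,1), ⟨(0,0,1), by simp [DSdig], (1,0,0), by simp [DSdig], by simp⟩,
          a + 1, b, c, ?_, ?_, ?_⟩
        · simp only [Prod.mk_add_mk, Prod.smul_mk, smul_eq_mul, Prod.mk.injEq]
          omega
        · simpa using notB_add hB 1 0 (-1) (by decide)
        · omega
      · refine ⟨(1,0,-1), ⟨(1,0,0), by simp [DSdig], (0,0,1), by simp [DSdig], by simp⟩,
          a, b, c + 1, ?_, hB, ?_⟩
        · simp only [Prod.mk_add_mk, Prod.smul_mk, smul_eq_mul, Prod.mk.injEq]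
          omega
        · omega
    · by_cases hB : ((a + 1, b, c) : ℤ × ℤ × ℤ) ∈ Bset
      · have hne : ¬(a + 1 = 0 ∧ b = 0 ∧ c = 0) := by
          rintro ⟨h1, h2, h3⟩; rw [h1, h2, h3] at hB; exact zero_not_B hB
        refine ⟨(1,0,-1), ⟨(1,0,0), by simp [DSdig], (0,0,1), by simp [DSdig], by simp⟩,
          a, b, c + 1, ?_, ?_, ?_⟩
        · simp only [Prod.mk_add_mk, Prod.smul_mk, smul_eq_mul, Prod.mk.injEq]
          omega
        · simpa using notB_add hB (-1) 0 1 (by decide)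
        · omega
      · refine ⟨(-1,0,1), ⟨(0,0,1), by simp [DSdig], (1,0,0), by simp [DSdig], by simp⟩,
          a + 1, b, c, ?_, hB, ?_⟩
        · simp only [Prod.mk_add_mk, Prod.smul_mk, smul_eq_mul, Prod.mk.injEq]
          omega
        · omega
  -- case (odd, odd, even)
  · rcases le_or_gt 0 a with hs | hs
    · by_cases hB : ((a, b + 1, c) : ℤ × ℤ × ℤ) ∈ Bset
      · have hne : ¬(a = 0 ∧ b + 1 = 0 ∧ c = 0) := by
          rintro ⟨h1, h2, h3⟩; rw [h1, h2, h3] at hB; exact zero_not_B hB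
        refine ⟨(-1,1,0), ⟨(0,1,0), by simp [DSdig], (1,0,0), by simp [DSdig], by simp⟩,
          a + 1, b, c, ?_, ?_, ?_⟩
        · simp only [Prod.mk_add_mk, Prod.smul_mk, smul_eq_mul, Prod.mk.injEq]
          omega
        · simpa using notB_add hB 1 (-1) 0 (by decide)
        · omega
      · refine ⟨(1,-1,0), ⟨(1,0,0), by simp [DSdig], (0,1,0), by simp [DSdig], by simp⟩,
          a, b + 1, c, ?_, hB, ?_⟩
        · simp only [Prod.mk_add_mk, Prod.smul_mk, smul_eq_mul, Prod.mk.injEq]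
          omega
        · omega
    · by_cases hB : ((a + 1, b, c) : ℤ × ℤ × ℤ) ∈ Bset
      · have hne : ¬(a + 1 = 0 ∧ b = 0 ∧ c = 0) := by
          rintro ⟨h1, h2, h3⟩; rw [h1, h2, h3] at hB; exact zero_not_B hB
        refine ⟨(1,-1,0), ⟨(1,0,0), by simp [DSdig], (0,1,0), by simp [DSdig], by simp⟩,
          a, b + 1, c, ?_, ?_, ?_⟩
        · simp only [Prod.mk_add_mk, Prod.smul_mk, smul_eq_mul, Prod.mk.injEq]
          omega
        · simpa using notB_add hB (-1) 1 0 (by decide)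
        · omega
      · refine ⟨(-1,1,0), ⟨(0,1,0), by simp [DSdig], (1,0,0), by simp [DSdig], by simp⟩,
          a + 1, b, c, ?_, hB, ?_⟩
        · simp only [Prod.mk_add_mk, Prod.smul_mk, smul_eq_mul, Prod.mk.injEq]
          omega
        · omega
  -- case (odd, odd, odd) : contradiction with p ∉ B
  · exact absurd (B_of_odd ⟨a, ha⟩ ⟨b, hb⟩ ⟨c, hc⟩) hp

lemma repr_of_notB : ∀ N : ℕ, ∀ p : ℤ × ℤ × ℤ,
    p.1.natAbs + p.2.1.natAbs + p.2.2.natAbs ≤ N → p ∉ Bset →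
    p ∈ ExpZ 2 (deltaZ DSdig) := by
  intro N
  induction N with
  | zero =>
      intro p hm _
      obtain ⟨a, b, c⟩ := p
      dsimp only at hm
      have hz : a = 0 ∧ b = 0 ∧ c = 0 := by omega
      obtain ⟨rfl, rfl, rfl⟩ := hz
      exact ExpZ_zero
  | succ n ih =>
      intro p hm hp
      obtain ⟨a, b, c⟩ := p
      dsimp only at hm
      by_cases h0 : a = 0 ∧ b = 0 ∧ c = 0
      · obtain ⟨rfl, rfl, rfl⟩ := h0
        exact ExpZ_zero
      · obtain ⟨d, hd, q1, q2, q3, heq, hqB, hlt⟩ := step a b c hp h0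
        rw [heq]
        refine ExpZ_cons hd (ih (q1, q2, q3) ?_ hqB)
        show q1.natAbs + q2.natAbs + q3.natAbs ≤ n
        omega

/-- `E(2, Δ(D_S')) = C = ℤ³ \ B`. -/
theorem stmt_5 : ExpZ 2 (deltaZ DSdig) = {p : ℤ × ℤ × ℤ | p ∉ Bset} := by
  ext p
  simp only [Set.mem_setOf_eq]
  constructor
  · rintro ⟨t, ht, d, hd, rfl⟩
    exact sum_not_B t d hd
  · intro hp
    exact repr_of_notB _ p le_rfl hp
end

section
/- With B = {(2^n x, 2^n y, 2^n z) : n ≥ 0, x, y, z odd} and C = ℤ³ \ B: for every (x,y,z) ∈ C with |x|+|y|+|z| > 0, there exists (x',y',z') ∈ C with |x'|+|y'|+|z'| < |x|+|y|+|z| and (x,y,z) − 2(x',y',z') ∈ Δ(D_S'), where Δ(D_S') = D_S' − D_S' for D_S' = {0, e₁, e₂, e₃}. -/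
lemma coord_fact (n : ℕ) (w : ℤ) (hw : Odd w) :
    2^n * w ≠ 0 ∧ 2^n * w % 2 = (if n = 0 then 1 else 0) := by
  obtain ⟨k, hk⟩ := hw
  constructor
  · refine mul_ne_zero (pow_ne_zero _ two_ne_zero) ?_
    omega
  · cases n with
    | zero => simpa using by omega
    | succ m =>
        simp only [Nat.succ_ne_zero, if_false]
        have h : (2:ℤ)^(m+1) * w = 2 * (2^m * w) := by ring
        rw [h]
        exact Int.mul_emod_right 2 _

lemma Bset_facts {a b c : ℤ} (h : (a,b,c) ∈ Bset) :
    a ≠ 0 ∧ b ≠ 0 ∧ c ≠ 0 ∧ a % 2 = b % 2 ∧ b % 2 = c % 2 := by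
  obtain ⟨n, x, y, z, hx, hy, hz, heq⟩ := h
  simp only [Prod.mk.injEq] at heq
  obtain ⟨h1, h2, h3⟩ := heq
  have fx := coord_fact n x hx
  have fy := coord_fact n y hy
  have fz := coord_fact n z hz
  rw [← h1] at fx; rw [← h2] at fy; rw [← h3] at fz
  exact ⟨fx.1, fy.1, fz.1, by rw [fx.2, fy.2], by rw [fy.2, fz.2]⟩

lemma Bdouble {a b c : ℤ} (h : (a,b,c) ∈ Bset) : (2*a, 2*b, 2*c) ∈ Bset := by
  obtain ⟨n, x, y, z, hx, hy, hz, heq⟩ := h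
  simp only [Prod.mk.injEq] at heq
  obtain ⟨h1, h2, h3⟩ := heq
  refine ⟨n+1, x, y, z, hx, hy, hz, ?_⟩
  simp only [Prod.mk.injEq]
  subst h1 h2 h3
  refine ⟨by ring, by ring, by ring⟩

lemma Bcyc {a b c : ℤ} (h : (a,b,c) ∈ Bset) : (c,a,b) ∈ Bset := by
  obtain ⟨n, x, y, z, hx, hy, hz, heq⟩ := h
  simp only [Prod.mk.injEq] at heq
  obtain ⟨h1, h2, h3⟩ := heq
  exact ⟨n, z, x, y, hz, hx, hy, by simp only [Prod.mk.injEq]; exact ⟨h3, h1, h2⟩⟩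

lemma Bswap {a b c : ℤ} (h : (a,b,c) ∈ Bset) : (b,a,c) ∈ Bset := by
  obtain ⟨n, x, y, z, hx, hy, hz, heq⟩ := h
  simp only [Prod.mk.injEq] at heq
  obtain ⟨h1, h2, h3⟩ := heq
  exact ⟨n, y, x, z, hy, hx, hz, by simp only [Prod.mk.injEq]; exact ⟨h2, h1, h3⟩⟩

lemma dmem {u v w : ℤ × ℤ × ℤ} (hu : u ∈ DSdig) (hv : v ∈ DSdig) (h : w = u - v) :
    w ∈ deltaZ DSdig := ⟨u, hu, v, hv, h⟩

lemma d000 : ((0,0,0) : ℤ×ℤ×ℤ) ∈ DSdig := by left; rfl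
lemma d100 : ((1,0,0) : ℤ×ℤ×ℤ) ∈ DSdig := by right; left; rfl
lemma d010 : ((0,1,0) : ℤ×ℤ×ℤ) ∈ DSdig := by right; right; left; rfl
lemma d001 : ((0,0,1) : ℤ×ℤ×ℤ) ∈ DSdig := by right; right; right; rfl

/-- Descent core for parity pattern (odd, even, even). -/
lemma core1 (a b c : ℤ) :
    ∃ q1 e : ℤ, (e = 1 ∨ e = -1) ∧ 2*a+1 = 2*q1 + e ∧
      (q1, b, c) ∉ Bset ∧
      |q1| + |b| + |c| < |2*a+1| + |2*b| + |2*c| := by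
  by_cases hbc : b = 0 ∨ c = 0
  · rcases le_or_gt 0 a with ha | ha
    · refine ⟨a, 1, Or.inl rfl, by ring, ?_, ?_⟩
      · intro h; obtain ⟨_, hb, hc, _⟩ := Bset_facts h; tauto
      · simp only [Int.abs_eq_natAbs]; omega
    · refine ⟨a+1, -1, Or.inr rfl, by ring, ?_, ?_⟩
      · intro h; obtain ⟨_, hb, hc, _⟩ := Bset_facts h; tauto
      · simp only [Int.abs_eq_natAbs]; omega
  · push_neg at hbc
    obtain ⟨hb, hc⟩ := hbc
    have hq : ∃ q1 e : ℤ, (e = 1 ∨ e = -1) ∧ 2*a+1 = 2*q1 + e ∧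
        ¬(q1 % 2 = b % 2 ∧ b % 2 = c % 2) := by
      by_cases h1 : b % 2 = c % 2
      · by_cases h2 : a % 2 = b % 2
        · exact ⟨a+1, -1, Or.inr rfl, by ring, by omega⟩
        · exact ⟨a, 1, Or.inl rfl, by ring, by omega⟩
      · exact ⟨a, 1, Or.inl rfl, by ring, by omega⟩
    obtain ⟨q1, e, he, heq, hP⟩ := hq
    refine ⟨q1, e, he, heq, ?_, ?_⟩
    · intro h; obtain ⟨_, _, _, h4, h5⟩ := Bset_facts h; exact hP ⟨h4, h5⟩
    · simp only [Int.abs_eq_natAbs]; omega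

/-- Descent core for parity pattern (odd, odd, even). -/
lemma core2 (a b c : ℤ) :
    ∃ q1 q2 e : ℤ, (e = 1 ∨ e = -1) ∧ 2*a+1 = 2*q1 + e ∧ 2*b+1 = 2*q2 - e ∧
      (q1, q2, c) ∉ Bset ∧
      |q1| + |q2| + |c| < |2*a+1| + |2*b+1| + |2*c| := by
  by_cases hc : c = 0
  · by_cases h : a = -1 ∧ b = 0
    · refine ⟨a+1, b, -1, Or.inr rfl, by ring, by ring, ?_, ?_⟩
      · intro hB; obtain ⟨h1, h2, _⟩ := Bset_facts hB; omega
      · simp only [Int.abs_eq_natAbs]; omega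
    · refine ⟨a, b+1, 1, Or.inl rfl, by ring, by ring, ?_, ?_⟩
      · intro hB; obtain ⟨_, _, h3, _⟩ := Bset_facts hB; exact h3 hc
      · simp only [Int.abs_eq_natAbs]; omega
  · have hq : ∃ q1 q2 e : ℤ, (e = 1 ∨ e = -1) ∧ 2*a+1 = 2*q1 + e ∧
        2*b+1 = 2*q2 - e ∧ ¬(q1 % 2 = q2 % 2 ∧ q2 % 2 = c % 2) := by
      by_cases h1 : a % 2 = (b+1) % 2
      · by_cases h2 : a % 2 = c % 2
        · exact ⟨a+1, b, -1, Or.inr rfl, by ring, by ring, by omega⟩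
        · exact ⟨a, b+1, 1, Or.inl rfl, by ring, by ring, by omega⟩
      · exact ⟨a, b+1, 1, Or.inl rfl, by ring, by ring, by omega⟩
    obtain ⟨q1, q2, e, he, heq1, heq2, hP⟩ := hq
    refine ⟨q1, q2, e, he, heq1, heq2, ?_, ?_⟩
    · intro h; obtain ⟨_, _, _, h4, h5⟩ := Bset_facts h; exact hP ⟨h4, h5⟩
    · simp only [Int.abs_eq_natAbs]; omega

/-- the descent step: every nonzero `(x,y,z) ∈ C = ℤ³ \ B` admits
`(x',y',z') ∈ C` with strictly smaller `|x|+|y|+|z|` such that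
`(x,y,z) − 2(x',y',z') ∈ Δ(D_S')`. -/
theorem stmt_6 : ∀ p : ℤ × ℤ × ℤ, p ∉ Bset →
    0 < |p.1| + |p.2.1| + |p.2.2| →
    ∃ q : ℤ × ℤ × ℤ, q ∉ Bset ∧
      |q.1| + |q.2.1| + |q.2.2| < |p.1| + |p.2.1| + |p.2.2| ∧
      p - (2 : ℤ) • q ∈ deltaZ DSdig := by
  rintro ⟨x, y, z⟩ hp hpos
  have hsub : ∀ q1 q2 q3 : ℤ,
      ((x, y, z) : ℤ×ℤ×ℤ) - (2:ℤ) • ((q1, q2, q3) : ℤ×ℤ×ℤ)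
        = (x - 2*q1, y - 2*q2, z - 2*q3) := by
    intro q1 q2 q3
    simp only [Prod.mk_sub_mk, Prod.smul_mk, smul_eq_mul]
  rcases Int.even_or_odd x with ⟨a, hx⟩ | ⟨a, hx⟩ <;>
    rcases Int.even_or_odd y with ⟨b, hy⟩ | ⟨b, hy⟩ <;>
      rcases Int.even_or_odd z with ⟨c, hz⟩ | ⟨c, hz⟩
  -- case 1: all even
  · have hx' : x = 2*a := by omega
    have hy' : y = 2*b := by omega
    have hz' : z = 2*c := by omega
    refine ⟨(a, b, c), ?_, ?_, ?_⟩
    · intro h; exact hp (by rw [hx', hy', hz']; exact Bdouble h)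
    · simp only [Int.abs_eq_natAbs] at hpos ⊢; omega
    · refine dmem d000 d000 ?_
      rw [hsub]
      simp only [Prod.mk_sub_mk, Prod.mk.injEq]
      refine ⟨by omega, by omega, by omega⟩
  -- case 2: x even, y even, z odd
  · have hx' : x = 2*a := by omega
    have hy' : y = 2*b := by omega
    obtain ⟨q1, e, he, heq, hqB, hqn⟩ := core1 c a b
    rw [← hz] at heq hqn
    refine ⟨(a, b, q1), ?_, ?_, ?_⟩
    · intro h; exact hqB (Bcyc h)
    · rw [hx', hy']; simp only [Int.abs_eq_natAbs] at hqn ⊢; omega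
    · have hv : x - 2*a = 0 := by omega
      have hv2 : y - 2*b = 0 := by omega
      rcases he with rfl | rfl
      · refine dmem d001 d000 ?_
        rw [hsub]; simp only [Prod.mk_sub_mk, Prod.mk.injEq]
        refine ⟨by omega, by omega, by omega⟩
      · refine dmem d000 d001 ?_
        rw [hsub]; simp only [Prod.mk_sub_mk, Prod.mk.injEq]
        refine ⟨by omega, by omega, by omega⟩
  -- case 3: x even, y odd, z even
  · have hx' : x = 2*a := by omega
    have hz' : z = 2*c := by omega
    obtain ⟨q1, e, he, heq, hqB, hqn⟩ := core1 b a c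
    rw [← hy] at heq hqn
    refine ⟨(a, q1, c), ?_, ?_, ?_⟩
    · intro h; exact hqB (Bswap h)
    · rw [hx', hz']; simp only [Int.abs_eq_natAbs] at hqn ⊢; omega
    · rcases he with rfl | rfl
      · refine dmem d010 d000 ?_
        rw [hsub]; simp only [Prod.mk_sub_mk, Prod.mk.injEq]
        refine ⟨by omega, by omega, by omega⟩
      · refine dmem d000 d010 ?_
        rw [hsub]; simp only [Prod.mk_sub_mk, Prod.mk.injEq]
        refine ⟨by omega, by omega, by omega⟩
  -- case 4: x even, y odd, z odd
  · have hx' : x = 2*a := by omega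
    obtain ⟨q1, q2, e, he, heq1, heq2, hqB, hqn⟩ := core2 b c a
    rw [← hy] at heq1 hqn
    rw [← hz] at heq2 hqn
    refine ⟨(a, q1, q2), ?_, ?_, ?_⟩
    · intro h; exact hqB (Bcyc (Bcyc h))
    · rw [hx']; simp only [Int.abs_eq_natAbs] at hqn ⊢; omega
    · rcases he with rfl | rfl
      · refine dmem d010 d001 ?_
        rw [hsub]; simp only [Prod.mk_sub_mk, Prod.mk.injEq]
        refine ⟨by omega, by omega, by omega⟩
      · refine dmem d001 d010 ?_
        rw [hsub]; simp only [Prod.mk_sub_mk, Prod.mk.injEq]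
        refine ⟨by omega, by omega, by omega⟩
  -- case 5: x odd, y even, z even
  · have hy' : y = 2*b := by omega
    have hz' : z = 2*c := by omega
    obtain ⟨q1, e, he, heq, hqB, hqn⟩ := core1 a b c
    rw [← hx] at heq hqn
    refine ⟨(q1, b, c), ?_, ?_, ?_⟩
    · exact hqB
    · rw [hy', hz']; simp only [Int.abs_eq_natAbs] at hqn ⊢; omega
    · rcases he with rfl | rfl
      · refine dmem d100 d000 ?_
        rw [hsub]; simp only [Prod.mk_sub_mk, Prod.mk.injEq]
        refine ⟨by omega, by omega, by omega⟩
      · refine dmem d000 d100 ?_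
        rw [hsub]; simp only [Prod.mk_sub_mk, Prod.mk.injEq]
        refine ⟨by omega, by omega, by omega⟩
  -- case 6: x odd, y even, z odd
  · have hy' : y = 2*b := by omega
    obtain ⟨q1, q2, e, he, heq1, heq2, hqB, hqn⟩ := core2 a c b
    rw [← hx] at heq1 hqn
    rw [← hz] at heq2 hqn
    refine ⟨(q1, b, q2), ?_, ?_, ?_⟩
    · intro h; exact hqB (Bswap (Bcyc h))
    · rw [hy']; simp only [Int.abs_eq_natAbs] at hqn ⊢; omega
    · rcases he with rfl | rfl
      · refine dmem d100 d001 ?_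
        rw [hsub]; simp only [Prod.mk_sub_mk, Prod.mk.injEq]
        refine ⟨by omega, by omega, by omega⟩
      · refine dmem d001 d100 ?_
        rw [hsub]; simp only [Prod.mk_sub_mk, Prod.mk.injEq]
        refine ⟨by omega, by omega, by omega⟩
  -- case 7: x odd, y odd, z even
  · have hz' : z = 2*c := by omega
    obtain ⟨q1, q2, e, he, heq1, heq2, hqB, hqn⟩ := core2 a b c
    rw [← hx] at heq1 hqn
    rw [← hy] at heq2 hqn
    refine ⟨(q1, q2, c), ?_, ?_, ?_⟩
    · exact hqB
    · rw [hz']; simp only [Int.abs_eq_natAbs] at hqn ⊢; omega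
    · rcases he with rfl | rfl
      · refine dmem d100 d010 ?_
        rw [hsub]; simp only [Prod.mk_sub_mk, Prod.mk.injEq]
        refine ⟨by omega, by omega, by omega⟩
      · refine dmem d010 d100 ?_
        rw [hsub]; simp only [Prod.mk_sub_mk, Prod.mk.injEq]
        refine ⟨by omega, by omega, by omega⟩
  -- case 8: all odd
  · exact absurd ⟨0, x, y, z, ⟨a, hx⟩, ⟨b, hy⟩, ⟨c, hz⟩, by simp⟩ hp
end

section
/- Let D_S^{u,v} = {(1,0), (0,1), (0,0), (u,v)} ⊂ ℝ². If u = p/r and v = q/r for odd coprime integers p, q, r (r ≠ 0), then the attractor F²(2, D_S^{u,v}) of the IFS {x ↦ (x+d)/2 : d ∈ D_S^{u,v}} has positive Lebesgue measure. -/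
open MeasureTheory Set Pointwise

/-- For `u = p/r`, `v = q/r` with `p, q, r` odd coprime integers
(`r ≠ 0`), the attractor of the IFS `{x ↦ (x+d)/2 : d ∈ D_S^{u,v}}` with
`D_S^{u,v} = {(1,0), (0,1), (0,0), (u,v)}` has positive Lebesgue measure. -/
theorem stmt_8 (p q r : ℤ) (hp : Odd p) (hq : Odd q) (hr : Odd r)
    (hco : Int.gcd p (Int.gcd q r) = 1) (hr0 : r ≠ 0)
    (u v : ℝ) (hu : u = (p : ℝ) / (r : ℝ)) (hv : v = (q : ℝ) / (r : ℝ))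
    (X : Set (ℝ × ℝ)) (hXne : X.Nonempty) (hXcpt : IsCompact X)
    (hX : X = ⋃ d ∈ ({(1,0), (0,1), (0,0), (u,v)} : Set (ℝ × ℝ)),
        (fun x => (2 : ℝ)⁻¹ • (x + d)) '' X) :
    0 < MeasureTheory.volume X := by
  have hrR : (r : ℝ) ≠ 0 := Int.cast_ne_zero.mpr hr0
  have hrabs : (1:ℝ) ≤ |(r:ℝ)| := by
    have : (1:ℤ) ≤ |r| := Int.one_le_abs hr0
    calc (1:ℝ) ≤ ((|r| : ℤ) : ℝ) := by exact_mod_cast this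
    _ = |(r:ℝ)| := by push_cast; ring
  set c : ℤ × ℤ → ℝ × ℝ := fun z => ((z.1 : ℝ) / r, (z.2 : ℝ) / r) with hc
  set E : Set (ℝ × ℝ) := ⋃ z : ℤ × ℤ, (fun x => x + c z) '' X with hEdef
  -- images of X under the IFS maps are in X
  have hsub : (⋃ d ∈ ({(1,0), (0,1), (0,0), (u,v)} : Set (ℝ × ℝ)),
      (fun x => (2 : ℝ)⁻¹ • (x + d)) '' X) ⊆ X := hX.ge
  have hmap : ∀ d ∈ ({(1,0), (0,1), (0,0), (u,v)} : Set (ℝ × ℝ)), ∀ x ∈ X,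
      (2:ℝ)⁻¹ • (x + d) ∈ X := by
    intro d hd x hx
    exact hsub (mem_biUnion hd ⟨x, hx, rfl⟩)
  -- half-invariance of E
  have hhalf : ∀ y ∈ E, (2:ℝ)⁻¹ • y ∈ E := by
    rintro y hy
    simp only [hEdef, mem_iUnion, mem_image] at hy ⊢
    obtain ⟨⟨a, b⟩, x, hx, rfl⟩ := hy
    -- choose digit according to parity of a, b
    have key : ∀ (d : ℝ × ℝ), d ∈ ({(1,0), (0,1), (0,0), (u,v)} : Set (ℝ × ℝ)) →
        ∀ a' b' : ℤ, (2:ℝ)⁻¹ • (x + c (a, b)) = (2:ℝ)⁻¹ • (x + d) + c (a', b') →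
        ∃ z' : ℤ × ℤ, ∃ x' ∈ X, x' + c z' = (2:ℝ)⁻¹ • (x + c (a, b)) := by
      intro d hd a' b' heq
      exact ⟨(a', b'), (2:ℝ)⁻¹ • (x + d), hmap d hd x hx, heq.symm⟩
    rcases Int.even_or_odd a with ha | ha <;> rcases Int.even_or_odd b with hb | hb
    · obtain ⟨a', ha'⟩ := ha; obtain ⟨b', hb'⟩ := hb
      refine key (0,0) (by simp) a' b' ?_
      have h1 : (a:ℝ) = a' + a' := by exact_mod_cast ha'
      have h2 : (b:ℝ) = b' + b' := by exact_mod_cast hb'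
      refine Prod.ext ?_ ?_ <;>
        simp only [hc, Prod.smul_fst, Prod.smul_snd, Prod.fst_add, Prod.snd_add,
          smul_eq_mul, h1, h2] <;> field_simp <;> ring
    · obtain ⟨a', ha'⟩ := ha; obtain ⟨b', hb'⟩ := hb.sub_odd hr
      refine key (0,1) (by simp) a' b' ?_
      have h1 : (a:ℝ) = a' + a' := by exact_mod_cast ha'
      have h2 : (b:ℝ) = r + (b' + b') := by
        have : b = r + (b' + b') := by omega
        exact_mod_cast this
      refine Prod.ext ?_ ?_ <;>
        simp only [hc, Prod.smul_fst, Prod.smul_snd, Prod.fst_add, Prod.snd_add,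
          smul_eq_mul, h1, h2] <;> field_simp <;> ring
    · obtain ⟨a', ha'⟩ := ha.sub_odd hr; obtain ⟨b', hb'⟩ := hb
      refine key (1,0) (by simp) a' b' ?_
      have h1 : (a:ℝ) = r + (a' + a') := by
        have : a = r + (a' + a') := by omega
        exact_mod_cast this
      have h2 : (b:ℝ) = b' + b' := by exact_mod_cast hb'
      refine Prod.ext ?_ ?_ <;>
        simp only [hc, Prod.smul_fst, Prod.smul_snd, Prod.fst_add, Prod.snd_add,
          smul_eq_mul, h1, h2] <;> field_simp <;> ring
    · obtain ⟨a', ha'⟩ := ha.sub_odd hp; obtain ⟨b', hb'⟩ := hb.sub_odd hq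
      refine key (u,v) (by simp) a' b' ?_
      have h1 : (a:ℝ) = p + (a' + a') := by
        have : a = p + (a' + a') := by omega
        exact_mod_cast this
      have h2 : (b:ℝ) = q + (b' + b') := by
        have : b = q + (b' + b') := by omega
        exact_mod_cast this
      refine Prod.ext ?_ ?_ <;>
        simp only [hc, hu, hv, Prod.smul_fst, Prod.smul_snd, Prod.fst_add, Prod.snd_add,
          smul_eq_mul, h1, h2] <;> field_simp <;> ring
  -- iterate
  have hiter : ∀ n : ℕ, ∀ y ∈ E, ((2:ℝ)⁻¹)^n • y ∈ E := by
    intro n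
    induction n with
    | zero => intro y hy; simpa using hy
    | succ n ih =>
        intro y hy
        have := hhalf _ (ih y hy)
        rw [smul_smul, ← pow_succ'] at this
        exact this
  -- E is dense
  obtain ⟨x₀, hx₀⟩ := hXne
  have hmemE : ∀ z : ℤ × ℤ, x₀ + c z ∈ E := fun z =>
    mem_iUnion.mpr ⟨z, ⟨x₀, hx₀, rfl⟩⟩
  have hdense : ∀ t : ℝ × ℝ, t ∈ closure E := by
    intro t
    rw [Metric.mem_closure_iff]
    intro ε hε
    obtain ⟨n, hn⟩ := exists_pow_lt_of_lt_one hε (by norm_num : (2:ℝ)⁻¹ < 1)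
    set a : ℤ := round ((r:ℝ) * ((2:ℝ)^n * t.1 - x₀.1)) with hadef
    set b : ℤ := round ((r:ℝ) * ((2:ℝ)^n * t.2 - x₀.2)) with hbdef
    refine ⟨((2:ℝ)⁻¹)^n • (x₀ + c (a, b)), hiter n _ (hmemE (a, b)), ?_⟩
    have hpow : (0:ℝ) < ((2:ℝ)⁻¹)^n := by positivity
    have hbound : ∀ (s w : ℝ), ∀ m : ℤ, m = round ((r:ℝ) * ((2:ℝ)^n * s - w)) →
        dist s (((2:ℝ)⁻¹)^n * (w + (m:ℝ)/r)) ≤ ((2:ℝ)⁻¹)^n := by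
      intro s w m hm
      have h12 : |(m:ℝ) - (r:ℝ) * ((2:ℝ)^n * s - w)| ≤ 1/2 := by
        rw [hm, abs_sub_comm]
        exact abs_sub_round _
      have h2n : ((2:ℝ)⁻¹)^n = ((2:ℝ)^n)⁻¹ := by rw [inv_pow]
      rw [Real.dist_eq]
      have hr1 : (0:ℝ) < |(r:ℝ)| := lt_of_lt_of_le one_pos hrabs
      have hfactor : s - ((2:ℝ)^n)⁻¹ * (w + (m:ℝ)/r) =
          (-(((2:ℝ)^n)⁻¹ / r)) * ((m:ℝ) - (r:ℝ) * ((2:ℝ)^n * s - w)) := by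
        field_simp
        ring
      rw [h2n, hfactor, abs_mul, abs_neg, abs_div, abs_of_pos (show (0:ℝ) < ((2:ℝ)^n)⁻¹ by positivity)]
      calc ((2:ℝ)^n)⁻¹ / |(r:ℝ)| * |(m:ℝ) - (r:ℝ) * ((2:ℝ)^n * s - w)|
          ≤ (((2:ℝ)^n)⁻¹ / 1) * (1/2) := by
            apply mul_le_mul _ h12 (abs_nonneg _) (by positivity)
            apply div_le_div_of_nonneg_left _ one_pos hrabs |>.trans_eq rfl
            positivity
        _ ≤ ((2:ℝ)^n)⁻¹ := by
            rw [div_one]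
            have h : (0:ℝ) < ((2:ℝ)^n)⁻¹ := by positivity
            linarith
    have hdist : dist t (((2:ℝ)⁻¹)^n • (x₀ + c (a, b))) ≤ ((2:ℝ)⁻¹)^n := by
      rw [Prod.dist_eq]
      apply max_le
      · have := hbound t.1 x₀.1 a hadef
        simpa [hc, inv_pow, mul_add] using this
      · have := hbound t.2 x₀.2 b hbdef
        simpa [hc, inv_pow, mul_add] using this
    exact lt_of_le_of_lt hdist hn
  -- E is closed
  have hΛclosed : IsClosed (Set.range c) := by
    have h1 : IsClosed ((Set.range ((↑) : ℤ → ℝ)) ×ˢ (Set.range ((↑) : ℤ → ℝ))) :=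
      (Int.isClosedEmbedding_coe_real.isClosed_range).prod
        Int.isClosedEmbedding_coe_real.isClosed_range
    have heq : Set.range c =
        (fun x : ℝ × ℝ => ((r:ℝ) * x.1, (r:ℝ) * x.2)) ⁻¹'
          ((Set.range ((↑) : ℤ → ℝ)) ×ˢ (Set.range ((↑) : ℤ → ℝ))) := by
      ext x
      simp only [hc, mem_range, mem_preimage, mem_prod, Prod.exists]
      constructor
      · rintro ⟨a, b, rfl⟩
        exact ⟨⟨a, by field_simp⟩, ⟨b, by field_simp⟩⟩
      · rintro ⟨⟨a, ha⟩, ⟨b, hb⟩⟩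
        refine ⟨a, b, ?_⟩
        refine Prod.ext ?_ ?_ <;> simp only
        · field_simp at ha ⊢; linarith [ha]
        · field_simp at hb ⊢; linarith [hb]
    rw [heq]
    exact h1.preimage (by fun_prop)
  have hEclosed : IsClosed E := by
    have heq : E = X + Set.range c := by
      ext y
      simp only [hEdef, mem_iUnion, mem_image, Set.mem_add, mem_range]
      constructor
      · rintro ⟨z, x, hx, rfl⟩; exact ⟨x, hx, c z, ⟨z, rfl⟩, rfl⟩
      · rintro ⟨x, hx, w, ⟨z, rfl⟩, rfl⟩; exact ⟨z, x, hx, rfl⟩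
    rw [heq]
    exact hΛclosed.add_left_of_isCompact hXcpt
  have hEuniv : E = univ := by
    apply Subset.antisymm (subset_univ _)
    intro t _
    rw [← hEclosed.closure_eq]
    exact hdense t
  -- measure argument
  by_contra hcon
  have hX0 : volume X = 0 := by
    have := not_lt.mp hcon
    exact le_antisymm this zero_le
  have hE0 : volume E = 0 := by
    apply le_antisymm _ zero_le
    calc volume E ≤ ∑' z : ℤ × ℤ, volume ((fun x => x + c z) '' X) := measure_iUnion_le _
      _ = 0 := by
          rw [ENNReal.tsum_eq_zero]
          intro z
          have : (fun x : ℝ × ℝ => x + c z) = (fun x : ℝ × ℝ => c z + x) := by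
            funext x; exact add_comm _ _
          rw [this, image_add_left, measure_preimage_add]
          exact hX0
  rw [hEuniv] at hE0
  exact (isOpen_univ.measure_pos volume univ_nonempty).ne' hE0
end

section
/- Let D_S^{u,v} = {(1,0), (0,1), (0,0), (u,v)}. If u = p/r and v = q/r for coprime integers p, q, r with not all of p, q, r odd, then the attractor F²(2, D_S^{u,v}) has Lebesgue measure zero. -/
namespace Stmt9

open MeasureTheory Pointwise

def d1 : Fin 4 → ℤ := ![1,0,0,0]
def d2 : Fin 4 → ℤ := ![0,1,0,0]
def d3 : Fin 4 → ℤ := ![0,0,0,1]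

def Good (x y z : ℤ) : Prop :=
  (x = 0 ∧ y = 0 ∧ z = 0) ∨
    (¬(x % 2 = 1 ∧ y % 2 = 1 ∧ z % 2 = 1) ∧ ¬(x % 2 = 0 ∧ y % 2 = 0 ∧ z % 2 = 0))

inductive Exp : ℤ → ℤ → ℤ → Prop
  | zero : Exp 0 0 0
  | step (x y z : ℤ) (i i' : Fin 4) (h : Exp x y z) :
      Exp (2*x + d1 i - d1 i') (2*y + d2 i - d2 i') (2*z + d3 i - d3 i')

set_option maxHeartbeats 2000000 in
theorem step_choice (x y z : ℤ) (h0 : ¬(x = 0 ∧ y = 0 ∧ z = 0)) (hg : Good x y z) :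
    ∃ (i i' : Fin 4) (x' y' z' : ℤ), Good x' y' z' ∧
      x = 2*x' + d1 i - d1 i' ∧ y = 2*y' + d2 i - d2 i' ∧ z = 2*z' + d3 i - d3 i' ∧
      x'.natAbs + y'.natAbs + z'.natAbs < x.natAbs + y.natAbs + z.natAbs := by
  have D : d1 0 = 1 ∧ d1 1 = 0 ∧ d1 2 = 0 ∧ d1 3 = 0 ∧ d2 0 = 0 ∧ d2 1 = 1 ∧ d2 2 = 0 ∧
      d2 3 = 0 ∧ d3 0 = 0 ∧ d3 1 = 0 ∧ d3 2 = 0 ∧ d3 3 = 1 := by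
    refine ⟨?_,?_,?_,?_,?_,?_,?_,?_,?_,?_,?_,?_⟩ <;> rfl
  obtain ⟨D10,D11,D12,D13,D20,D21,D22,D23,D30,D31,D32,D33⟩ := D
  rcases Int.even_or_odd x with ⟨a, rfl⟩ | ⟨a, rfl⟩ <;>
    rcases Int.even_or_odd y with ⟨b, rfl⟩ | ⟨b, rfl⟩ <;>
      rcases Int.even_or_odd z with ⟨c, rfl⟩ | ⟨c, rfl⟩
  -- eee : impossible
  · unfold Good at hg; omega
  -- eeo : digits (3,2)/(2,3)
  · by_cases h : Good a b c ∧ a.natAbs + b.natAbs + c.natAbs <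
        (a+a).natAbs + (b+b).natAbs + (2*c+1).natAbs
    · exact ⟨3, 2, a, b, c, h.1, by omega, by omega, by omega, h.2⟩
    · refine ⟨2, 3, a, b, c+1, ?_, by omega, by omega, by omega, ?_⟩ <;>
        · unfold Good at *; omega
  -- eoe : digits (1,2)/(2,1)
  · by_cases h : Good a b c ∧ a.natAbs + b.natAbs + c.natAbs <
        (a+a).natAbs + (2*b+1).natAbs + (c+c).natAbs
    · exact ⟨1, 2, a, b, c, h.1, by omega, by omega, by omega, h.2⟩
    · refine ⟨2, 1, a, b+1, c, ?_, by omega, by omega, by omega, ?_⟩ <;>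
        · unfold Good at *; omega
  -- eoo : digits (1,3)/(3,1)
  · by_cases h : Good a b (c+1) ∧ a.natAbs + b.natAbs + (c+1).natAbs <
        (a+a).natAbs + (2*b+1).natAbs + (2*c+1).natAbs
    · exact ⟨1, 3, a, b, c+1, h.1, by omega, by omega, by omega, h.2⟩
    · refine ⟨3, 1, a, b+1, c, ?_, by omega, by omega, by omega, ?_⟩ <;>
        · unfold Good at *; omega
  -- oee : digits (0,2)/(2,0)
  · by_cases h : Good a b c ∧ a.natAbs + b.natAbs + c.natAbs <
        (2*a+1).natAbs + (b+b).natAbs + (c+c).natAbs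
    · exact ⟨0, 2, a, b, c, h.1, by omega, by omega, by omega, h.2⟩
    · refine ⟨2, 0, a+1, b, c, ?_, by omega, by omega, by omega, ?_⟩ <;>
        · unfold Good at *; omega
  -- oeo : digits (0,3)/(3,0)
  · by_cases h : Good a b (c+1) ∧ a.natAbs + b.natAbs + (c+1).natAbs <
        (2*a+1).natAbs + (b+b).natAbs + (2*c+1).natAbs
    · exact ⟨0, 3, a, b, c+1, h.1, by omega, by omega, by omega, h.2⟩
    · refine ⟨3, 0, a+1, b, c, ?_, by omega, by omega, by omega, ?_⟩ <;>
        · unfold Good at *; omega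
  -- ooe : digits (0,1)/(1,0)
  · by_cases h : Good a (b+1) c ∧ a.natAbs + (b+1).natAbs + c.natAbs <
        (2*a+1).natAbs + (2*b+1).natAbs + (c+c).natAbs
    · exact ⟨0, 1, a, b+1, c, h.1, by omega, by omega, by omega, h.2⟩
    · refine ⟨1, 0, a+1, b, c, ?_, by omega, by omega, by omega, ?_⟩ <;>
        · unfold Good at *; omega
  -- ooo : impossible
  · unfold Good at hg; omega

theorem good_exp : ∀ (N : ℕ) (x y z : ℤ), x.natAbs + y.natAbs + z.natAbs ≤ N →
    Good x y z → Exp x y z := by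
  intro N
  induction N with
  | zero =>
    intro x y z hs _
    have h : x = 0 ∧ y = 0 ∧ z = 0 := by omega
    obtain ⟨rfl, rfl, rfl⟩ := h
    exact Exp.zero
  | succ N ih =>
    intro x y z hs hg
    by_cases h0 : x = 0 ∧ y = 0 ∧ z = 0
    · obtain ⟨rfl, rfl, rfl⟩ := h0; exact Exp.zero
    · obtain ⟨i, i', x', y', z', hg', hx, hy, hz, hlt⟩ := step_choice x y z h0 hg
      have := Exp.step x' y' z' i i' (ih x' y' z' (by omega) hg')
      rw [hx, hy, hz]; exact this

theorem exp_words {x y z : ℤ} (h : Exp x y z) :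
    ∃ (n : ℕ) (σ σ' : Fin n → Fin 4),
      (∑ j : Fin n, (2:ℤ)^(j:ℕ) * d1 (σ j)) - (∑ j : Fin n, (2:ℤ)^(j:ℕ) * d1 (σ' j)) = x ∧
      (∑ j : Fin n, (2:ℤ)^(j:ℕ) * d2 (σ j)) - (∑ j : Fin n, (2:ℤ)^(j:ℕ) * d2 (σ' j)) = y ∧
      (∑ j : Fin n, (2:ℤ)^(j:ℕ) * d3 (σ j)) - (∑ j : Fin n, (2:ℤ)^(j:ℕ) * d3 (σ' j)) = z := by
  induction h with
  | zero => exact ⟨0, Fin.elim0, Fin.elim0, by simp, by simp, by simp⟩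
  | step x y z i i' h ih =>
    obtain ⟨n, σ, σ', h1, h2, h3⟩ := ih
    refine ⟨n+1, Fin.cons i σ, Fin.cons i' σ', ?_, ?_, ?_⟩ <;>
    · rw [Fin.sum_univ_succ, Fin.sum_univ_succ]
      simp only [Fin.cons_zero, Fin.cons_succ, Fin.val_zero, Fin.val_succ, pow_zero, pow_succ,
        one_mul]
      have key : ∀ f : Fin n → ℤ, ∑ j : Fin n, (2:ℤ)^(j:ℕ) * 2 * f j
          = 2 * ∑ j : Fin n, (2:ℤ)^(j:ℕ) * f j := by
        intro f; rw [Finset.mul_sum]; congr 1; funext j; ring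
      rw [key, key]
      omega

noncomputable def E (u v : ℝ) : Fin 4 → ℝ × ℝ := ![(1,0),(0,1),(0,0),(u,v)]

noncomputable def gmap (u v : ℝ) (n : ℕ) (σ : Fin n → Fin 4) : ℝ × ℝ → ℝ × ℝ :=
  fun x => ((2:ℝ)⁻¹)^n • (x + ∑ j : Fin n, (2:ℝ)^(j:ℕ) • E u v (σ j))

theorem gmap_comp (u v : ℝ) (n : ℕ) (σ : Fin n → Fin 4) (i : Fin 4) :
    (gmap u v n σ) ∘ (fun x => (2:ℝ)⁻¹ • (x + E u v i)) = gmap u v (n+1) (Fin.cons i σ) := by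
  funext x
  simp only [gmap, Function.comp_apply]
  rw [Fin.sum_univ_succ]
  simp only [Fin.cons_zero, Fin.cons_succ, Fin.val_zero, Fin.val_succ, pow_zero, one_smul]
  have h1 : ∑ j : Fin n, (2:ℝ)^((j:ℕ)+1) • E u v (σ j)
      = (2:ℝ) • ∑ j : Fin n, (2:ℝ)^(j:ℕ) • E u v (σ j) := by
    rw [Finset.smul_sum]; congr 1; funext j; rw [smul_smul, pow_succ]; ring_nf
  rw [h1]
  rw [show ((2:ℝ)⁻¹)^(n+1) = ((2:ℝ)⁻¹)^n * (2:ℝ)⁻¹ from pow_succ _ _]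
  module

theorem iter (u v : ℝ) (X : Set (ℝ × ℝ))
    (hX4 : X = ⋃ i : Fin 4, (fun x => (2:ℝ)⁻¹ • (x + E u v i)) '' X) (n : ℕ) :
    X = ⋃ σ : Fin n → Fin 4, gmap u v n σ '' X := by
  induction n with
  | zero =>
    have h : ∀ σ : Fin 0 → Fin 4, gmap u v 0 σ '' X = X := by
      intro σ
      have h' : gmap u v 0 σ = id := by funext x; simp [gmap]
      rw [h', Set.image_id]
    rw [Set.iUnion_congr h, Set.iUnion_const]
  | succ n ih =>
    conv_lhs => rw [ih]
    ext pt
    simp only [Set.mem_iUnion]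
    constructor
    · rintro ⟨σ, hpt⟩
      rw [hX4, Set.image_iUnion] at hpt
      simp only [Set.mem_iUnion] at hpt
      obtain ⟨i, hpt⟩ := hpt
      rw [← Set.image_comp, gmap_comp] at hpt
      exact ⟨Fin.cons i σ, hpt⟩
    · rintro ⟨τ, hpt⟩
      refine ⟨Fin.tail τ, ?_⟩
      rw [hX4, Set.image_iUnion]
      simp only [Set.mem_iUnion]
      refine ⟨τ 0, ?_⟩
      rw [← Set.image_comp, gmap_comp, Fin.cons_self_tail]
      exact hpt

theorem gvol (u v : ℝ) (X : Set (ℝ × ℝ)) (n : ℕ) (σ : Fin n → Fin 4) :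
    volume (gmap u v n σ '' X) = ENNReal.ofReal ((((2:ℝ)⁻¹)^n)^2) * volume X := by
  set t := ∑ j : Fin n, (2:ℝ)^(j:ℕ) • E u v (σ j) with ht
  have himg : gmap u v n σ '' X = ((2:ℝ)⁻¹)^n • ((fun x => x + t) '' X) := by
    rw [← Set.image_smul, ← Set.image_comp]
    rfl
  rw [himg, Measure.addHaar_smul]
  have hr : Module.finrank ℝ (ℝ × ℝ) = 2 := by simp
  rw [hr]
  congr 1
  · rw [abs_of_nonneg (by positivity)]
  · rw [Set.image_add_right, measure_preimage_add_right]

end Stmt9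

/-- For `u = p/r`, `v = q/r` with `p, q, r` coprime integers not
all odd (`r ≠ 0`), the attractor of the IFS `{x ↦ (x+d)/2 : d ∈ D_S^{u,v}}`
with `D_S^{u,v} = {(1,0), (0,1), (0,0), (u,v)}` has Lebesgue measure zero. -/
theorem stmt_9 (p q r : ℤ) (hco : Int.gcd p (Int.gcd q r) = 1)
    (hodd : ¬ (Odd p ∧ Odd q ∧ Odd r)) (hr0 : r ≠ 0)
    (u v : ℝ) (hu : u = (p : ℝ) / (r : ℝ)) (hv : v = (q : ℝ) / (r : ℝ))
    (X : Set (ℝ × ℝ)) (hXne : X.Nonempty) (hXcpt : IsCompact X)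
    (hX : X = ⋃ d ∈ ({(1,0), (0,1), (0,0), (u,v)} : Set (ℝ × ℝ)),
        (fun x => (2 : ℝ)⁻¹ • (x + d)) '' X) :
    MeasureTheory.volume X = 0 := by
  classical
  open Stmt9 MeasureTheory Pointwise in
  -- rewrite the IFS equation with `Fin 4` indexing
  have hX4 : X = ⋃ i : Fin 4, (fun x => (2:ℝ)⁻¹ • (x + E u v i)) '' X := by
    have hrange : ({(1,0), (0,1), (0,0), (u,v)} : Set (ℝ × ℝ)) = Set.range (E u v) := by
      simp only [E, Matrix.range_cons, Matrix.range_empty]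
      ext w
      simp only [Set.mem_insert_iff, Set.mem_singleton_iff, Set.union_empty, Set.mem_union,
        Set.mem_singleton_iff]
    rw [hrange, Set.biUnion_range] at hX
    exact hX
  -- arithmetic: the starting triple is Good
  have hrne : (r:ℝ) ≠ 0 := Int.cast_ne_zero.mpr hr0
  have hnodd : ¬(p % 2 = 1 ∧ q % 2 = 1 ∧ r % 2 = 1) := by
    simp only [Int.odd_iff] at hodd; exact hodd
  have hneven : ¬(p % 2 = 0 ∧ q % 2 = 0 ∧ r % 2 = 0) := by
    rintro ⟨hp, hq, hr⟩
    have h2p : (2:ℤ) ∣ p := Int.dvd_of_emod_eq_zero hp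
    have h2q : (2:ℤ) ∣ q := Int.dvd_of_emod_eq_zero hq
    have h2r : (2:ℤ) ∣ r := Int.dvd_of_emod_eq_zero hr
    have hqr : (2:ℤ) ∣ (Int.gcd q r : ℤ) := Int.dvd_coe_gcd h2q h2r
    have : (2:ℤ) ∣ (Int.gcd p (Int.gcd q r) : ℤ) := Int.dvd_coe_gcd h2p hqr
    rw [hco] at this
    norm_num at this
  have hgood : Good (-p) (-q) r := by
    unfold Stmt9.Good
    omega
  have hexp : Exp (-p) (-q) r :=
    good_exp ((-p).natAbs + (-q).natAbs + r.natAbs) _ _ _ le_rfl hgood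
  obtain ⟨n, σ, σ', hd1, hd2, hd3⟩ := exp_words hexp
  -- the two words are distinct
  have hσ : σ ≠ σ' := by
    rintro rfl
    rw [sub_self] at hd3
    exact hr0 hd3.symm
  -- the two words give the same map
  have hEfst : ∀ i : Fin 4, (E u v i).1 = (d1 i : ℝ) + u * (d3 i : ℝ) := by
    intro i; fin_cases i <;> norm_num [E, d1, d3]
  have hEsnd : ∀ i : Fin 4, (E u v i).2 = (d2 i : ℝ) + v * (d3 i : ℝ) := by
    intro i; fin_cases i <;> norm_num [E, d2, d3]
  have c1 : ∀ τ : Fin n → Fin 4, (∑ j : Fin n, (2:ℝ)^(j:ℕ) • E u v (τ j)).1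
      = ((∑ j : Fin n, (2:ℤ)^(j:ℕ) * d1 (τ j) : ℤ) : ℝ)
        + u * ((∑ j : Fin n, (2:ℤ)^(j:ℕ) * d3 (τ j) : ℤ) : ℝ) := by
    intro τ
    rw [Prod.fst_sum]
    push_cast
    rw [Finset.mul_sum, ← Finset.sum_add_distrib]
    apply Finset.sum_congr rfl
    intro j _
    rw [Prod.smul_fst, hEfst, smul_eq_mul]
    ring
  have c2 : ∀ τ : Fin n → Fin 4, (∑ j : Fin n, (2:ℝ)^(j:ℕ) • E u v (τ j)).2
      = ((∑ j : Fin n, (2:ℤ)^(j:ℕ) * d2 (τ j) : ℤ) : ℝ)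
        + v * ((∑ j : Fin n, (2:ℤ)^(j:ℕ) * d3 (τ j) : ℤ) : ℝ) := by
    intro τ
    rw [Prod.snd_sum]
    push_cast
    rw [Finset.mul_sum, ← Finset.sum_add_distrib]
    apply Finset.sum_congr rfl
    intro j _
    rw [Prod.smul_snd, hEsnd, smul_eq_mul]
    ring
  have e1 : ((∑ j : Fin n, (2:ℤ)^(j:ℕ) * d1 (σ j) : ℤ) : ℝ)
      - ((∑ j : Fin n, (2:ℤ)^(j:ℕ) * d1 (σ' j) : ℤ) : ℝ) = -(p:ℝ) := by
    exact_mod_cast congrArg (Int.cast : ℤ → ℝ) hd1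
  have e2 : ((∑ j : Fin n, (2:ℤ)^(j:ℕ) * d2 (σ j) : ℤ) : ℝ)
      - ((∑ j : Fin n, (2:ℤ)^(j:ℕ) * d2 (σ' j) : ℤ) : ℝ) = -(q:ℝ) := by
    exact_mod_cast congrArg (Int.cast : ℤ → ℝ) hd2
  have e3 : ((∑ j : Fin n, (2:ℤ)^(j:ℕ) * d3 (σ j) : ℤ) : ℝ)
      - ((∑ j : Fin n, (2:ℤ)^(j:ℕ) * d3 (σ' j) : ℤ) : ℝ) = (r:ℝ) := by
    exact_mod_cast congrArg (Int.cast : ℤ → ℝ) hd3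
  have keyu : -(p:ℝ) + u * r = 0 := by rw [hu]; field_simp; ring
  have keyv : -(q:ℝ) + v * r = 0 := by rw [hv]; field_simp; ring
  have hts : ∑ j : Fin n, (2:ℝ)^(j:ℕ) • E u v (σ j)
      = ∑ j : Fin n, (2:ℝ)^(j:ℕ) • E u v (σ' j) := by
    apply Prod.ext_iff.mpr
    constructor
    · rw [c1 σ, c1 σ']
      linear_combination e1 + u * e3 + keyu
    · rw [c2 σ, c2 σ']
      linear_combination e2 + v * e3 + keyv
  have hgg : gmap u v n σ = gmap u v n σ' := by
    unfold Stmt9.gmap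
    rw [hts]
  -- covering with one map removed
  have hiter := iter u v X hX4 n
  have hcover : X ⊆ ⋃ τ ∈ Finset.univ.erase σ', gmap u v n τ '' X := by
    intro pt hpt
    rw [hiter] at hpt
    simp only [Set.mem_iUnion] at hpt
    obtain ⟨τ, hτ⟩ := hpt
    simp only [Set.mem_iUnion]
    by_cases hτσ : τ = σ'
    · refine ⟨σ, Finset.mem_erase.mpr ⟨hσ, Finset.mem_univ σ⟩, ?_⟩
      rw [hgg]
      rwa [hτσ] at hτ
    · exact ⟨τ, Finset.mem_erase.mpr ⟨hτσ, Finset.mem_univ τ⟩, hτ⟩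
  have hle : volume X ≤ ((4^n - 1 : ℕ) : ENNReal) *
      (ENNReal.ofReal ((((2:ℝ)⁻¹)^n)^2) * volume X) := by
    calc volume X ≤ volume (⋃ τ ∈ Finset.univ.erase σ', gmap u v n τ '' X) :=
          measure_mono hcover
      _ ≤ ∑ τ ∈ Finset.univ.erase σ', volume (gmap u v n τ '' X) :=
          measure_biUnion_finset_le _ _
      _ = ∑ τ ∈ Finset.univ.erase σ', ENNReal.ofReal ((((2:ℝ)⁻¹)^n)^2) * volume X := by
          apply Finset.sum_congr rfl
          intro τ _
          exact gvol u v X n τ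
      _ = ((4^n - 1 : ℕ) : ENNReal) * (ENNReal.ofReal ((((2:ℝ)⁻¹)^n)^2) * volume X) := by
          rw [Finset.sum_const, Finset.card_erase_of_mem (Finset.mem_univ _), Finset.card_univ]
          rw [nsmul_eq_mul]
          congr 2
          simp [Fintype.card_fun]
  -- conclude
  have hk : (((4:ℕ)^n : ℕ) : ENNReal) * ENNReal.ofReal ((((2:ℝ)⁻¹)^n)^2) = 1 := by
    have h4 : (((4:ℕ)^n : ℕ) : ENNReal) = ENNReal.ofReal ((4:ℝ)^n) := by
      rw [← ENNReal.ofReal_natCast]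
      congr 1
      push_cast
      ring
    have h1 : (((2:ℝ)⁻¹)^n)^2 = ((2:ℝ)^(2*n))⁻¹ := by
      rw [← pow_mul, Nat.mul_comm n 2, inv_pow]
    have h2 : (4:ℝ)^n = (2:ℝ)^(2*n) := by
      rw [pow_mul]; norm_num
    have hpow : (4:ℝ)^n * (((2:ℝ)⁻¹)^n)^2 = 1 := by
      rw [h1, h2, mul_inv_cancel₀ (by positivity)]
    rw [h4, ← ENNReal.ofReal_mul (by positivity), hpow, ENNReal.ofReal_one]
  have hk0 : ENNReal.ofReal ((((2:ℝ)⁻¹)^n)^2) ≠ 0 := by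
    rw [← ENNReal.ofReal_zero, Ne, ENNReal.ofReal_eq_ofReal_iff (by positivity) le_rfl]
    positivity
  have hktop : ENNReal.ofReal ((((2:ℝ)⁻¹)^n)^2) ≠ ⊤ := ENNReal.ofReal_ne_top
  have hlt1 : ((4^n - 1 : ℕ) : ENNReal) * ENNReal.ofReal ((((2:ℝ)⁻¹)^n)^2) < 1 := by
    rw [← hk]
    refine (ENNReal.mul_lt_mul_iff_left hk0 hktop).mpr ?_
    exact_mod_cast Nat.sub_lt (by positivity) one_pos
  by_contra h0
  have hfin : volume X ≠ ⊤ := hXcpt.measure_lt_top.ne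
  have : ((4^n - 1 : ℕ) : ENNReal) * ENNReal.ofReal ((((2:ℝ)⁻¹)^n)^2) * volume X
      < 1 * volume X := (ENNReal.mul_lt_mul_iff_left h0 hfin).mpr hlt1
  rw [one_mul] at this
  rw [← mul_assoc] at hle
  exact absurd (lt_of_le_of_lt hle this) (lt_irrefl _)
end

section
/- Let D_S^{u,v} = {(1,0), (0,1), (0,0), (u,v)} with u or v irrational. Then the attractor F²(2, D_S^{u,v}) has Lebesgue measure zero. More precisely, the set of differences E(2, Δ(D_S^{u,v})) fails to be uniformly discrete: for every δ > 0 there is a nonzero point x ∈ E(2, Δ(D_S^{u,v})) with |x| ≤ δ. -/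
/-- Differenced digit set `Δ(D) = D - D` in `ℝ²`. -/
def delta2 (D : Set (ℝ × ℝ)) : Set (ℝ × ℝ) :=
  {p | ∃ x ∈ D, ∃ y ∈ D, p = x - y}

/-- Radix expansion set `E(k,D) = ⋃_{t≥1} {∑_{j<t} k^j d_j : d_j ∈ D}` in `ℝ²`. -/
def Exp2 (k : ℕ) (D : Set (ℝ × ℝ)) : Set (ℝ × ℝ) :=
  {x | ∃ t : ℕ, 1 ≤ t ∧ ∃ d : ℕ → ℝ × ℝ, (∀ j < t, d j ∈ D) ∧
        x = ∑ j ∈ Finset.range t, (k : ℝ) ^ j • d j}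

open MeasureTheory Set Pointwise
open scoped ENNReal

namespace Stmt10

def Digit (p q r : ℤ) : Prop :=
  p.natAbs ≤ 1 ∧ q.natAbs ≤ 1 ∧ r.natAbs ≤ 1 ∧ p*q ≤ 0 ∧ p*r ≤ 0 ∧ q*r ≤ 0

lemma Digit.swap12 {p q r : ℤ} (h : Digit p q r) : Digit q p r := by
  obtain ⟨h1, h2, h3, h4, h5, h6⟩ := h
  exact ⟨h2, h1, h3, by rwa [mul_comm], h6, h5⟩

lemma Digit.swap23 {p q r : ℤ} (h : Digit p q r) : Digit p r q := by
  obtain ⟨h1, h2, h3, h4, h5, h6⟩ := h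
  exact ⟨h1, h3, h2, h5, h4, by rwa [mul_comm]⟩

lemma Digit.swap13 {p q r : ℤ} (h : Digit p q r) : Digit r q p := by
  obtain ⟨h1, h2, h3, h4, h5, h6⟩ := h
  exact ⟨h3, h2, h1, by rwa [mul_comm], by rwa [mul_comm], by rwa [mul_comm]⟩

inductive Rch : ℤ → ℤ → ℤ → Prop
  | zero : Rch 0 0 0
  | step {p q r A B C : ℤ} (hd : Digit p q r) (h : Rch A B C) : Rch (2*A+p) (2*B+q) (2*C+r)

lemma Rch.swap12 {A B C : ℤ} (h : Rch A B C) : Rch B A C := by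
  induction h with
  | zero => exact Rch.zero
  | step hd _ ih => exact Rch.step hd.swap12 ih

lemma Rch.swap23 {A B C : ℤ} (h : Rch A B C) : Rch A C B := by
  induction h with
  | zero => exact Rch.zero
  | step hd _ ih => exact Rch.step hd.swap23 ih

lemma Rch.swap13 {A B C : ℤ} (h : Rch A B C) : Rch C B A := by
  induction h with
  | zero => exact Rch.zero
  | step hd _ ih => exact Rch.step hd.swap13 ih

def Bad (A B C : ℤ) : Prop :=
  ∃ (k : ℕ) (a b c : ℤ), Odd a ∧ Odd b ∧ Odd c ∧ A = 2^k*a ∧ B = 2^k*b ∧ C = 2^k*c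

lemma Bad.swap12 {A B C : ℤ} : Bad A B C → Bad B A C := by
  rintro ⟨k, a, b, c, ha, hb, hc, h1, h2, h3⟩; exact ⟨k, b, a, c, hb, ha, hc, h2, h1, h3⟩

lemma Bad.swap23 {A B C : ℤ} : Bad A B C → Bad A C B := by
  rintro ⟨k, a, b, c, ha, hb, hc, h1, h2, h3⟩; exact ⟨k, a, c, b, ha, hc, hb, h1, h3, h2⟩

lemma Bad.swap13 {A B C : ℤ} : Bad A B C → Bad C B A := by
  rintro ⟨k, a, b, c, ha, hb, hc, h1, h2, h3⟩; exact ⟨k, c, b, a, hc, hb, ha, h3, h2, h1⟩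

lemma pow_odd_inj {k k' : ℕ} {b b' : ℤ} (hb : Odd b) (hb' : Odd b')
    (h : 2^k * b = 2^k' * b') : k = k' := by
  by_contra hne
  rcases Nat.lt_or_ge k k' with hlt | hge
  · have he : k' = k + (k'-k) := by omega
    rw [he, pow_add, mul_assoc] at h
    have hb2 : b = 2^(k'-k) * b' := mul_left_cancel₀ (by positivity) h
    have : (2:ℤ) ∣ b := by
      rw [hb2]; exact Dvd.dvd.mul_right (dvd_pow_self 2 (by omega)) _
    rcases hb with ⟨m, hm⟩; omega
  · have hlt : k' < k := by omega
    have he : k = k' + (k-k') := by omega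
    rw [he, pow_add, mul_assoc] at h
    have hb2 : b' = 2^(k-k') * b := (mul_left_cancel₀ (a := (2:ℤ)^k') (by positivity) h.symm)
    have : (2:ℤ) ∣ b' := by
      rw [hb2]; exact Dvd.dvd.mul_right (dvd_pow_self 2 (by omega)) _
    rcases hb' with ⟨m, hm⟩; omega

lemma bad_shared {x y z x' y' : ℤ} (h1 : Bad x y z) (h2 : Bad x' y' z) : Even (x - x') := by
  rcases h1 with ⟨k, a, b, c, ha, hb, hc, e1, e2, e3⟩
  rcases h2 with ⟨k', a', b', c', ha', hb', hc', f1, f2, f3⟩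
  have hk : k = k' := pow_odd_inj hc hc' (by rw [← e3, ← f3])
  subst hk
  rcases Nat.eq_zero_or_pos k with h0 | hpos
  · subst h0; simp at e1 f1; subst e1; subst f1; exact Odd.sub_odd ha ha'
  · obtain ⟨k', rfl⟩ : ∃ k'', k = k''+1 := ⟨k-1, by omega⟩
    exact ⟨2^k' * a - 2^k' * a', by rw [e1, f1]; ring⟩

lemma bad_ne_zero {A B C : ℤ} (h : Bad A B C) : A ≠ 0 ∧ B ≠ 0 ∧ C ≠ 0 := by
  rcases h with ⟨k, a, b, c, ha, hb, hc, e1, e2, e3⟩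
  have hp : (2:ℤ)^k ≠ 0 := by positivity
  rcases ha with ⟨m, hm⟩; rcases hb with ⟨m2, hm2⟩; rcases hc with ⟨m3, hm3⟩
  subst e1; subst e2; subst e3
  refine ⟨?_, ?_, ?_⟩ <;> simp [hp] <;> omega

lemma digit100 : Digit 1 0 0 := by simp [Digit]
lemma digitm100 : Digit (-1) 0 0 := by simp [Digit]
lemma digit000 : Digit 0 0 0 := by simp [Digit]
lemma digit1m10 : Digit 1 (-1) 0 := by norm_num [Digit]
lemma digitm110 : Digit (-1) 1 0 := by norm_num [Digit]

lemma one_odd_aux {n : ℕ} (IH : ∀ A B C : ℤ, A.natAbs + B.natAbs + C.natAbs < n → ¬ Bad A B C → Rch A B C)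
    {A B C : ℤ} (hn : A.natAbs + B.natAbs + C.natAbs = n)
    (hA : Odd A) (hB : Even B) (hC : Even C) (hnb : ¬ Bad A B C) : Rch A B C := by
  obtain ⟨m, hm⟩ := hA
  obtain ⟨b, hb⟩ := hB
  obtain ⟨c, hc⟩ := hC
  by_cases hpos : 0 < A
  · by_cases hbad : Bad m b c
    · have hnb' : ¬ Bad (m+1) b c := by
        intro h'
        have := bad_shared h' hbad
        rcases this with ⟨t, ht⟩; omega
      obtain ⟨-, hb0, hc0⟩ := bad_ne_zero hbad
      have hr : Rch (m+1) b c := IH _ _ _ (by omega) hnb'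
      have := Rch.step digitm100 hr
      rw [show A = 2*(m+1)+(-1) by omega, show B = 2*b+0 by omega, show C = 2*c+0 by omega]
      exact this
    · have hr : Rch m b c := IH _ _ _ (by omega) hbad
      have := Rch.step digit100 hr
      rw [show A = 2*m+1 by omega, show B = 2*b+0 by omega, show C = 2*c+0 by omega]
      exact this
  · by_cases hbad : Bad (m+1) b c
    · have hnb' : ¬ Bad m b c := by
        intro h'
        have := bad_shared h' hbad
        rcases this with ⟨t, ht⟩; omega
      obtain ⟨-, hb0, hc0⟩ := bad_ne_zero hbad
      have hr : Rch m b c := IH _ _ _ (by omega) hnb'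
      have := Rch.step digit100 hr
      rw [show A = 2*m+1 by omega, show B = 2*b+0 by omega, show C = 2*c+0 by omega]
      exact this
    · have hr : Rch (m+1) b c := IH _ _ _ (by omega) hbad
      have := Rch.step digitm100 hr
      rw [show A = 2*(m+1)+(-1) by omega, show B = 2*b+0 by omega, show C = 2*c+0 by omega]
      exact this

lemma two_odd_aux {n : ℕ} (IH : ∀ A B C : ℤ, A.natAbs + B.natAbs + C.natAbs < n → ¬ Bad A B C → Rch A B C)
    {A B C : ℤ} (hn : A.natAbs + B.natAbs + C.natAbs = n)
    (hA : Odd A) (hB : Odd B) (hC : Even C) (hnb : ¬ Bad A B C) : Rch A B C := by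
  obtain ⟨m, hm⟩ := hA
  obtain ⟨l, hl⟩ := hB
  obtain ⟨c, hc⟩ := hC
  by_cases hpos : 0 < A
  · by_cases hbad : Bad m (l+1) c
    · have hnb' : ¬ Bad (m+1) l c := by
        intro h'
        have := bad_shared h' hbad
        rcases this with ⟨t, ht⟩; omega
      obtain ⟨-, -, hc0⟩ := bad_ne_zero hbad
      have hr : Rch (m+1) l c := IH _ _ _ (by omega) hnb'
      have := Rch.step digitm110 hr
      rw [show A = 2*(m+1)+(-1) by omega, show B = 2*l+1 by omega, show C = 2*c+0 by omega]
      exact this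
    · have hr : Rch m (l+1) c := IH _ _ _ (by omega) hbad
      have := Rch.step digit1m10 hr
      rw [show A = 2*m+1 by omega, show B = 2*(l+1)+(-1) by omega, show C = 2*c+0 by omega]
      exact this
  · by_cases hbad : Bad (m+1) l c
    · have hnb' : ¬ Bad m (l+1) c := by
        intro h'
        have := bad_shared h' hbad
        rcases this with ⟨t, ht⟩; omega
      obtain ⟨-, -, hc0⟩ := bad_ne_zero hbad
      have hr : Rch m (l+1) c := IH _ _ _ (by omega) hnb'
      have := Rch.step digit1m10 hr
      rw [show A = 2*m+1 by omega, show B = 2*(l+1)+(-1) by omega, show C = 2*c+0 by omega]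
      exact this
    · have hr : Rch (m+1) l c := IH _ _ _ (by omega) hbad
      have := Rch.step digitm110 hr
      rw [show A = 2*(m+1)+(-1) by omega, show B = 2*l+1 by omega, show C = 2*c+0 by omega]
      exact this

lemma rch_of_not_bad (A B C : ℤ) (h : ¬ Bad A B C) : Rch A B C := by
  suffices H : ∀ n, ∀ A B C : ℤ, A.natAbs + B.natAbs + C.natAbs = n → ¬Bad A B C → Rch A B C from
    H _ A B C rfl h
  intro n
  induction n using Nat.strong_induction_on with
  | _ n IH =>
    intro A B C hn hnb
    have IH' : ∀ A B C : ℤ, A.natAbs+B.natAbs+C.natAbs < n → ¬Bad A B C → Rch A B C :=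
      fun A B C h hh => IH _ h A B C rfl hh
    rcases Int.even_or_odd A with hA | hA <;> rcases Int.even_or_odd B with hB | hB <;>
      rcases Int.even_or_odd C with hC | hC
    · -- EEE
      obtain ⟨a, ha⟩ := hA; obtain ⟨b, hb⟩ := hB; obtain ⟨c, hc⟩ := hC
      by_cases h0 : A = 0 ∧ B = 0 ∧ C = 0
      · rw [h0.1, h0.2.1, h0.2.2]; exact Rch.zero
      · have hnb' : ¬ Bad a b c := by
          rintro ⟨k, x, y, z, hx, hy, hz, e1, e2, e3⟩
          exact hnb ⟨k+1, x, y, z, hx, hy, hz, by rw [ha, e1]; ring,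
            by rw [hb, e2]; ring, by rw [hc, e3]; ring⟩
        have hr : Rch a b c := IH' a b c (by omega) hnb'
        have := Rch.step digit000 hr
        rw [show A = 2*a+0 by omega, show B = 2*b+0 by omega, show C = 2*c+0 by omega]
        exact this
    · -- EEO
      exact (one_odd_aux IH' (by omega) hC hB hA (fun h => hnb h.swap13)).swap13
    · -- EOE
      exact (one_odd_aux IH' (by omega) hB hA hC (fun h => hnb h.swap12)).swap12
    · -- EOO
      exact (two_odd_aux IH' (by omega) hC hB hA (fun h => hnb h.swap13)).swap13
    · -- OEE
      exact one_odd_aux IH' hn hA hB hC hnb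
    · -- OEO
      exact (two_odd_aux IH' (by omega) hA hC hB (fun h => hnb h.swap23)).swap23
    · -- OOE
      exact two_odd_aux IH' hn hA hB hC hnb
    · -- OOO
      exact absurd ⟨0, A, B, C, hA, hB, hC, by ring, by ring, by ring⟩ hnb
def Duv (u v : ℝ) : Set (ℝ × ℝ) := {(1,0), (0,1), (0,0), (u,v)}

lemma mem_delta2 {D : Set (ℝ×ℝ)} {a b : D → D} {x y z : ℝ×ℝ} (hx : x ∈ D) (hy : y ∈ D)
    (h : z = x - y) : z ∈ delta2 D := ⟨x, hx, y, hy, h⟩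

lemma digit_mem (u v : ℝ) {p q r : ℤ} (h : Digit p q r) :
    (((p:ℝ)*u + q, (p:ℝ)*v + r) : ℝ×ℝ) ∈ delta2 (Duv u v) := by
  obtain ⟨h1, h2, h3, h4, h5, h6⟩ := h
  have hp : p = -1 ∨ p = 0 ∨ p = 1 := by omega
  have hq : q = -1 ∨ q = 0 ∨ q = 1 := by omega
  have hr : r = -1 ∨ r = 0 ∨ r = 1 := by omega
  have m1 : ((1,0) : ℝ×ℝ) ∈ Duv u v := by simp [Duv]
  have m2 : ((0,1) : ℝ×ℝ) ∈ Duv u v := by simp [Duv]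
  have m3 : ((0,0) : ℝ×ℝ) ∈ Duv u v := by simp [Duv]
  have m4 : ((u,v) : ℝ×ℝ) ∈ Duv u v := by simp [Duv]
  rcases hp with rfl|rfl|rfl <;> rcases hq with rfl|rfl|rfl <;> rcases hr with rfl|rfl|rfl <;>
    revert h4 h5 h6 <;> norm_num
  · exact ⟨_, m3, _, m4, by norm_num [Prod.ext_iff] <;> ring⟩
  · exact ⟨_, m2, _, m4, by norm_num [Prod.ext_iff] <;> ring⟩
  · exact ⟨_, m1, _, m4, by norm_num [Prod.ext_iff] <;> ring⟩
  · exact ⟨_, m3, _, m1, by norm_num [Prod.ext_iff] <;> ring⟩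
  · exact ⟨_, m2, _, m1, by norm_num [Prod.ext_iff] <;> ring⟩
  · exact ⟨_, m3, _, m2, by norm_num [Prod.ext_iff] <;> ring⟩
  · exact ⟨_, m3, _, m3, by norm_num [Prod.ext_iff] <;> ring⟩
  · exact ⟨_, m2, _, m3, by norm_num [Prod.ext_iff] <;> ring⟩
  · exact ⟨_, m1, _, m2, by norm_num [Prod.ext_iff] <;> ring⟩
  · exact ⟨_, m1, _, m3, by norm_num [Prod.ext_iff] <;> ring⟩
  · exact ⟨_, m4, _, m1, by norm_num [Prod.ext_iff] <;> ring⟩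
  · exact ⟨_, m4, _, m2, by norm_num [Prod.ext_iff] <;> ring⟩
  · exact ⟨_, m4, _, m3, by norm_num [Prod.ext_iff] <;> ring⟩

lemma rch_exp (u v : ℝ) {A B C : ℤ} (h : Rch A B C) :
    (((A:ℝ)*u + B, (A:ℝ)*v + C) : ℝ×ℝ) ∈ Exp2 2 (delta2 (Duv u v)) := by
  induction h with
  | zero =>
    refine ⟨1, le_refl 1, fun _ => 0, fun j _ => ⟨(1,0), by simp [Duv], (1,0), by simp [Duv], by simp⟩, ?_⟩
    simp
  | @step p q r A B C hd h ih =>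
    obtain ⟨t, ht, d, hmem, hsum⟩ := ih
    refine ⟨t+1, by omega, fun n => Nat.casesOn n ((p:ℝ)*u + q, (p:ℝ)*v + r) d, ?_, ?_⟩
    · intro j hj
      cases j with
      | zero => exact digit_mem u v hd
      | succ m => exact hmem m (by omega)
    · rw [Finset.sum_range_succ']
      have h2 : ∀ j, ((2:ℕ):ℝ)^(j+1) • (Nat.casesOn (j+1) ((p:ℝ)*u + q, (p:ℝ)*v + r) d : ℝ×ℝ)
          = (2:ℝ) • (((2:ℕ):ℝ)^j • d j) := by
        intro j
        simp only [Nat.cast_ofNat, pow_succ]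
        rw [smul_smul]
        ring_nf
      simp only [h2]
      rw [← Finset.smul_sum, ← hsum]
      simp only [Nat.cast_ofNat, pow_zero, one_smul]
      apply Prod.ext <;> push_cast <;> simp [Prod.ext_iff] <;> ring

lemma irr_lin_ne {u : ℝ} (hu : Irrational u) {A B : ℤ} (hA : A ≠ 0) : (A:ℝ)*u + B ≠ 0 := by
  intro h
  have hA' : (A:ℝ) ≠ 0 := Int.cast_ne_zero.2 hA
  apply hu
  refine ⟨(-B : ℚ)/(A : ℚ), ?_⟩
  push_cast
  field_simp
  linarith

lemma fract_close {x y : ℝ} {n : ℕ} (hn : 0 < n)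
    (h : ⌊Int.fract x * n⌋₊ = ⌊Int.fract y * n⌋₊) : |Int.fract x - Int.fract y| ≤ 1/n := by
  have hnn : (0:ℝ) < n := by exact_mod_cast hn
  have hx0 : 0 ≤ Int.fract x * n := mul_nonneg (Int.fract_nonneg x) (le_of_lt hnn)
  have hy0 : 0 ≤ Int.fract y * n := mul_nonneg (Int.fract_nonneg y) (le_of_lt hnn)
  have hx1 : (⌊Int.fract x * n⌋₊ : ℝ) ≤ Int.fract x * n := Nat.floor_le hx0
  have hy1 : (⌊Int.fract y * n⌋₊ : ℝ) ≤ Int.fract y * n := Nat.floor_le hy0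
  have hx2 : Int.fract x * n < ⌊Int.fract x * n⌋₊ + 1 := Nat.lt_floor_add_one _
  have hy2 : Int.fract y * n < ⌊Int.fract y * n⌋₊ + 1 := Nat.lt_floor_add_one _
  rw [h] at hx1 hx2
  have e1 : Int.fract x - Int.fract y ≤ 1/n := by
    have h1 : (Int.fract x - Int.fract y) * n ≤ 1 := by nlinarith
    exact (le_div_iff₀ hnn).2 h1
  have e2 : Int.fract y - Int.fract x ≤ 1/n := by
    have h1 : (Int.fract y - Int.fract x) * n ≤ 1 := by nlinarith
    exact (le_div_iff₀ hnn).2 h1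
  exact abs_le.2 ⟨by linarith, e1⟩

lemma dirichlet_simul (u v : ℝ) (n : ℕ) (hn : 0 < n) :
    ∃ A B C : ℤ, 0 < A ∧ |(A:ℝ)*u + B| ≤ 1/n ∧ |(A:ℝ)*v + C| ≤ 1/n := by
  have hcard : Fintype.card (Fin n × Fin n) < Fintype.card (Fin (n^2+1)) := by
    simpa [Fintype.card_prod, pow_two] using Nat.lt_succ_self (n*n)
  set g : Fin (n^2+1) → Fin n × Fin n := fun i =>
    (⟨⌊Int.fract ((i:ℕ) * u) * n⌋₊, by
        apply (Nat.floor_lt (mul_nonneg (Int.fract_nonneg _) (Nat.cast_nonneg n))).2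
        calc Int.fract ((i:ℕ) * u) * n < 1 * n :=
              mul_lt_mul_of_pos_right (Int.fract_lt_one _) (by exact_mod_cast hn)
          _ = n := one_mul _⟩,
     ⟨⌊Int.fract ((i:ℕ) * v) * n⌋₊, by
        apply (Nat.floor_lt (mul_nonneg (Int.fract_nonneg _) (Nat.cast_nonneg n))).2
        calc Int.fract ((i:ℕ) * v) * n < 1 * n :=
              mul_lt_mul_of_pos_right (Int.fract_lt_one _) (by exact_mod_cast hn)
          _ = n := one_mul _⟩) with hg
  obtain ⟨i, j, hij, hgij⟩ := Fintype.exists_ne_map_eq_of_card_lt g hcard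
  have core : ∀ i j : Fin (n^2+1), (j:ℕ) < (i:ℕ) → g i = g j →
      ∃ A B C : ℤ, 0 < A ∧ |(A:ℝ)*u + B| ≤ 1/n ∧ |(A:ℝ)*v + C| ≤ 1/n := by
    intro i j hlt hgij
    refine ⟨(i:ℕ) - (j:ℕ), ⌊((j:ℕ):ℝ)*u⌋ - ⌊((i:ℕ):ℝ)*u⌋, ⌊((j:ℕ):ℝ)*v⌋ - ⌊((i:ℕ):ℝ)*v⌋,
      by omega, ?_, ?_⟩
    · have h1 : ⌊Int.fract ((i:ℕ) * u) * n⌋₊ = ⌊Int.fract ((j:ℕ) * u) * n⌋₊ := by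
        have := congrArg (fun p => (p.1 : ℕ)) hgij; simpa [hg] using this
      have hcl := fract_close hn h1
      have heq : ((((i:ℕ) - (j:ℕ) : ℤ)):ℝ)*u + ((⌊((j:ℕ):ℝ)*u⌋ - ⌊((i:ℕ):ℝ)*u⌋ : ℤ) : ℝ)
          = Int.fract ((i:ℕ) * u) - Int.fract ((j:ℕ) * u) := by
        unfold Int.fract
        push_cast
        ring
      rw [heq]
      exact hcl
    · have h1 : ⌊Int.fract ((i:ℕ) * v) * n⌋₊ = ⌊Int.fract ((j:ℕ) * v) * n⌋₊ := by
        have := congrArg (fun p => (p.2 : ℕ)) hgij; simpa [hg] using this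
      have hcl := fract_close hn h1
      have heq : ((((i:ℕ) - (j:ℕ) : ℤ)):ℝ)*v + ((⌊((j:ℕ):ℝ)*v⌋ - ⌊((i:ℕ):ℝ)*v⌋ : ℤ) : ℝ)
          = Int.fract ((i:ℕ) * v) - Int.fract ((j:ℕ) * v) := by
        unfold Int.fract
        push_cast
        ring
      rw [heq]
      exact hcl
  rcases Ne.lt_or_gt hij with hlt | hlt
  · exact core j i (Fin.lt_def.1 hlt) hgij.symm
  · exact core i j (Fin.lt_def.1 hlt) hgij


lemma lower_margin (u : ℝ) (A B : ℤ) :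
    min (Int.fract ((A:ℝ)*u)) (1 - Int.fract ((A:ℝ)*u)) ≤ |(A:ℝ)*u + B| := by
  set x : ℝ := (A:ℝ)*u
  have h1 : (0:ℝ) ≤ Int.fract x := Int.fract_nonneg x
  have h2 : Int.fract x < 1 := Int.fract_lt_one x
  have hfl : (⌊x⌋ : ℝ) + Int.fract x = x := by
    unfold Int.fract; ring
  rcases le_or_gt 0 (⌊x⌋ + B : ℤ) with hk | hk
  · apply le_trans (min_le_left _ _)
    have hk' : (0:ℝ) ≤ ((⌊x⌋ + B : ℤ) : ℝ) := by exact_mod_cast hk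
    push_cast at hk'
    have : Int.fract x ≤ x + B := by linarith
    exact le_trans this (le_abs_self _)
  · apply le_trans (min_le_right _ _)
    have hk0 : (⌊x⌋ + B : ℤ) ≤ -1 := by omega
    have hk' : ((⌊x⌋ + B : ℤ) : ℝ) ≤ -1 := by exact_mod_cast hk0
    push_cast at hk'
    have : 1 - Int.fract x ≤ -(x + B) := by linarith
    exact le_trans this (neg_le_abs _)

lemma margin_pos {u : ℝ} (hu : Irrational u) {A : ℤ} (hA : A ≠ 0) :
    0 < min (Int.fract ((A:ℝ)*u)) (1 - Int.fract ((A:ℝ)*u)) := by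
  have h2 : Int.fract ((A:ℝ)*u) < 1 := Int.fract_lt_one _
  rcases lt_or_eq_of_le (Int.fract_nonneg ((A:ℝ)*u)) with h1 | h1
  · exact lt_min h1 (by linarith)
  · exfalso
    apply irr_lin_ne hu hA (B := -⌊(A:ℝ)*u⌋)
    have : Int.fract ((A:ℝ)*u) = 0 := h1.symm
    unfold Int.fract at this
    push_cast
    linarith

lemma dirichlet {u : ℝ} (v : ℝ) (hu : Irrational u) {ε : ℝ} (hε : 0 < ε) (N : ℤ) :
    ∃ A B C : ℤ, N < A ∧ |(A:ℝ)*u + B| ≤ ε ∧ |(A:ℝ)*v + C| ≤ ε := by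
  by_cases hS : 1 ≤ N
  case neg =>
    obtain ⟨n, hn⟩ := exists_nat_one_div_lt hε
    obtain ⟨A, B, C, hA, h1, h2⟩ := dirichlet_simul u v (n+1) (by omega)
    exact ⟨A, B, C, by omega, le_trans h1 (by push_cast at hn ⊢; linarith),
      le_trans h2 (by push_cast at hn ⊢; linarith)⟩
  case pos =>
    have hne : (Finset.Icc (1:ℤ) N).Nonempty := by
      rw [Finset.nonempty_Icc]; omega
    set m : ℝ := (Finset.Icc (1:ℤ) N).inf' hne
      (fun A => min (Int.fract ((A:ℝ)*u)) (1 - Int.fract ((A:ℝ)*u))) with hm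
    have hmpos : 0 < m := by
      rw [hm, Finset.lt_inf'_iff]
      intro A hA
      rw [Finset.mem_Icc] at hA
      exact margin_pos hu (by omega)
    have hε2 : 0 < min ε (m/2) := lt_min hε (by linarith)
    obtain ⟨n, hn⟩ := exists_nat_one_div_lt hε2
    obtain ⟨A, B, C, hA, h1, h2⟩ := dirichlet_simul u v (n+1) (by omega)
    have hb1 : |(A:ℝ)*u + B| ≤ min ε (m/2) := le_trans h1 (by push_cast at hn ⊢; linarith)
    have hb2 : |(A:ℝ)*v + C| ≤ min ε (m/2) := le_trans h2 (by push_cast at hn ⊢; linarith)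
    refine ⟨A, B, C, ?_, le_trans hb1 (min_le_left _ _), le_trans hb2 (min_le_left _ _)⟩
    by_contra hAN
    have hmem : A ∈ Finset.Icc (1:ℤ) N := Finset.mem_Icc.2 ⟨by omega, by omega⟩
    have h3 : m ≤ |(A:ℝ)*u + B| := le_trans (Finset.inf'_le _ hmem) (lower_margin u A B)
    have h4 : |(A:ℝ)*u + B| ≤ m/2 := le_trans hb1 (min_le_right _ _)
    linarith


lemma abs_sub_le' (X Y : ℝ) : |X - Y| ≤ |X| + |Y| := by
  rw [sub_eq_add_neg]
  exact le_trans (abs_add_le _ _) (by rw [abs_neg])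

lemma descent (u v δ : ℝ) (hδ : 0 < δ)
    (enemy : ∀ A B C : ℤ, ¬(A = 0 ∧ B = 0 ∧ C = 0) → |(A:ℝ)*u+B| ≤ δ → |(A:ℝ)*v+C| ≤ δ →
      Bad A B C) :
    ∀ n : ℕ, ∀ a₁ b₁ c₁ a₂ b₂ c₂ : ℤ,
    Odd a₁ → Odd b₁ → Odd c₁ → Odd a₂ → Odd b₂ → Odd c₂ →
    |(a₁:ℝ)*u+b₁| ≤ δ/2 → |(a₁:ℝ)*v+c₁| ≤ δ/2 → |(a₂:ℝ)*u+b₂| ≤ δ/2 → |(a₂:ℝ)*v+c₂| ≤ δ/2 →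
    a₁*b₂ - a₂*b₁ ≠ 0 → (a₁*b₂ - a₂*b₁).natAbs = n → False := by
  intro n
  induction n using Nat.strong_induction_on with
  | _ n IH =>
  intro a₁ b₁ c₁ a₂ b₂ c₂ ha₁ hb₁ hc₁ ha₂ hb₂ hc₂ h1u h1v h2u h2v hdet hn
  have hsne : ¬(a₁ - a₂ = 0 ∧ b₁ - b₂ = 0 ∧ c₁ - c₂ = 0) := by
    rintro ⟨e1, e2, e3⟩
    apply hdet
    have h1 : a₁ = a₂ := by omega
    have h2 : b₁ = b₂ := by omega
    rw [h1, h2]; ring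
  have hsu : |((a₁ - a₂ : ℤ):ℝ)*u + ((b₁ - b₂ : ℤ):ℝ)| ≤ δ := by
    have he : ((a₁ - a₂:ℤ):ℝ)*u + ((b₁ - b₂:ℤ):ℝ) = ((a₁:ℝ)*u+b₁) - ((a₂:ℝ)*u+b₂) := by
      push_cast; ring
    rw [he]
    exact le_trans (abs_sub_le' _ _) (by linarith)
  have hsv : |((a₁ - a₂ : ℤ):ℝ)*v + ((c₁ - c₂ : ℤ):ℝ)| ≤ δ := by
    have he : ((a₁ - a₂:ℤ):ℝ)*v + ((c₁ - c₂:ℤ):ℝ) = ((a₁:ℝ)*v+c₁) - ((a₂:ℝ)*v+c₂) := by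
      push_cast; ring
    rw [he]
    exact le_trans (abs_sub_le' _ _) (by linarith)
  obtain ⟨k, e₁, e₂, e₃, he₁, he₂, he₃, f1, f2, f3⟩ := enemy _ _ _ hsne hsu hsv
  have hke : 1 ≤ k := by
    by_contra hk0
    have hk : k = 0 := by omega
    subst hk
    simp only [pow_zero, one_mul] at f1
    rcases ha₁ with ⟨s, hs⟩; rcases ha₂ with ⟨t, ht⟩; rcases he₁ with ⟨w, hw⟩; omega
  have h2k : (2:ℝ) ≤ 2^k := by
    calc (2:ℝ) = 2^1 := (pow_one 2).symm
    _ ≤ 2^k := by exact pow_le_pow_right₀ (by norm_num) hke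
  have habs2 : |(2:ℝ)^k| = 2^k := abs_of_pos (by positivity)
  have heu : |(e₁:ℝ)*u + e₂| ≤ δ/2 := by
    have hfac : ((a₁ - a₂:ℤ):ℝ)*u + ((b₁ - b₂:ℤ):ℝ) = 2^k*((e₁:ℝ)*u + e₂) := by
      rw [f1, f2]; push_cast; ring
    rw [hfac, abs_mul, habs2] at hsu
    nlinarith [abs_nonneg ((e₁:ℝ)*u + e₂)]
  have hev : |(e₁:ℝ)*v + e₃| ≤ δ/2 := by
    have hfac : ((a₁ - a₂:ℤ):ℝ)*v + ((c₁ - c₂:ℤ):ℝ) = 2^k*((e₁:ℝ)*v + e₃) := by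
      rw [f1, f3]; push_cast; ring
    rw [hfac, abs_mul, habs2] at hsv
    nlinarith [abs_nonneg ((e₁:ℝ)*v + e₃)]
  have hdet' : 2^k * (a₁*e₂ - e₁*b₁) = -(a₁*b₂ - a₂*b₁) := by
    calc 2^k * (a₁*e₂ - e₁*b₁) = a₁*(2^k*e₂) - (2^k*e₁)*b₁ := by ring
    _ = a₁*(b₁-b₂) - (a₁-a₂)*b₁ := by rw [← f2, ← f1]
    _ = -(a₁*b₂ - a₂*b₁) := by ring
  have hne' : a₁*e₂ - e₁*b₁ ≠ 0 := by
    intro h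
    rw [h, mul_zero] at hdet'
    omega
  have hlt : (a₁*e₂ - e₁*b₁).natAbs < n := by
    have hcong := congrArg Int.natAbs hdet'
    rw [Int.natAbs_mul, Int.natAbs_neg, hn] at hcong
    have hnab : ((2:ℤ)^k).natAbs = 2^k := by
      rw [Int.natAbs_pow]
      rfl
    rw [hnab] at hcong
    have h2k' : 2 ≤ 2^k := by
      calc 2 = 2^1 := (Nat.pow_one 2).symm
      _ ≤ 2^k := Nat.pow_le_pow_right (by norm_num) hke
    have hpos : 1 ≤ (a₁*e₂ - e₁*b₁).natAbs := by
      rcases Nat.eq_zero_or_pos (a₁*e₂ - e₁*b₁).natAbs with h | h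
      · exact absurd (Int.natAbs_eq_zero.1 h) hne'
      · exact h
    nlinarith [hcong]
  exact IH _ hlt a₁ b₁ c₁ e₁ e₂ e₃ ha₁ hb₁ hc₁ he₁ he₂ he₃ h1u h1v heu hev hne' rfl


lemma main_exists (u v : ℝ) (hu : Irrational u) (δ : ℝ) (hδ : 0 < δ) :
    ∃ A B C : ℤ, ¬ Bad A B C ∧ ¬(A = 0 ∧ B = 0 ∧ C = 0) ∧
      |(A:ℝ)*u+B| ≤ δ ∧ |(A:ℝ)*v+C| ≤ δ := by
  by_contra hcon
  have enemy : ∀ A B C : ℤ, ¬(A = 0 ∧ B = 0 ∧ C = 0) → |(A:ℝ)*u+B| ≤ δ → |(A:ℝ)*v+C| ≤ δ →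
      Bad A B C := by
    intro A B C h0 h1 h2
    by_contra hb
    exact hcon ⟨A, B, C, hb, h0, h1, h2⟩
  clear hcon
  have reduce : ∀ A B C : ℤ, ¬(A = 0 ∧ B = 0 ∧ C = 0) → |(A:ℝ)*u+B| ≤ δ/4 → |(A:ℝ)*v+C| ≤ δ/4 →
      ∃ (a b c : ℤ) (k : ℕ), Odd a ∧ Odd b ∧ Odd c ∧ |(a:ℝ)*u+b| ≤ δ/4 ∧ |(a:ℝ)*v+c| ≤ δ/4 ∧
        A = 2^k*a ∧ B = 2^k*b ∧ C = 2^k*c := by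
    intro A B C h0 h1 h2
    obtain ⟨k, a, b, c, ha, hb, hc, e1, e2, e3⟩ :=
      enemy A B C h0 (le_trans h1 (by linarith)) (le_trans h2 (by linarith))
    have h1k : (1:ℝ) ≤ 2^k := one_le_pow₀ (by norm_num)
    have hfu : (A:ℝ)*u + B = 2^k*((a:ℝ)*u+b) := by rw [e1, e2]; push_cast; ring
    have hfv : (A:ℝ)*v + C = 2^k*((a:ℝ)*v+c) := by rw [e1, e3]; push_cast; ring
    refine ⟨a, b, c, k, ha, hb, hc, ?_, ?_, e1, e2, e3⟩
    · rw [hfu, abs_mul, abs_of_pos (show (0:ℝ) < 2^k by positivity)] at h1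
      nlinarith [abs_nonneg ((a:ℝ)*u+b)]
    · rw [hfv, abs_mul, abs_of_pos (show (0:ℝ) < 2^k by positivity)] at h2
      nlinarith [abs_nonneg ((a:ℝ)*v+c)]
  obtain ⟨A₁, B₁, C₁, hA₁, h1u, h1v⟩ := dirichlet v hu (show (0:ℝ) < δ/4 by linarith) 0
  have hA₁0 : A₁ ≠ 0 := by omega
  have q1pos : (0:ℝ) < |(A₁:ℝ)*u + B₁| := abs_pos.2 (irr_lin_ne hu hA₁0)
  obtain ⟨N, hN⟩ := exists_int_gt ((A₁:ℝ) * (δ/4) / |(A₁:ℝ)*u+B₁|)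
  obtain ⟨A₂, B₂, C₂, hA₂, h2u, h2v⟩ := dirichlet v hu (show (0:ℝ) < δ/4 by linarith) (max N 0)
  have hA₂Z : (0:ℤ) < A₂ := lt_of_le_of_lt (le_max_right N 0) hA₂
  have hA₂0 : A₂ ≠ 0 := by omega
  have hdet : A₁*B₂ - A₂*B₁ ≠ 0 := by
    intro h
    have hq : ((A₁:ℝ)*B₂) = ((A₂:ℝ)*B₁) := by exact_mod_cast (by omega : A₁*B₂ = A₂*B₁)
    have hrel : (A₁:ℝ)*((A₂:ℝ)*u+B₂) = (A₂:ℝ)*((A₁:ℝ)*u+B₁) := by linear_combination hq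
    have hA₁R : (0:ℝ) < A₁ := by exact_mod_cast hA₁
    have hA₂R : (0:ℝ) < A₂ := by exact_mod_cast hA₂Z
    have habs : (A₁:ℝ)*|(A₂:ℝ)*u+B₂| = (A₂:ℝ)*|(A₁:ℝ)*u+B₁| := by
      have hc := congrArg abs hrel
      rw [abs_mul, abs_mul, abs_of_pos hA₁R, abs_of_pos hA₂R] at hc
      exact hc
    have hbig : (A₁:ℝ) * (δ/4) / |(A₁:ℝ)*u+B₁| < A₂ := by
      apply lt_of_lt_of_le hN
      have h1 : (N:ℝ) ≤ ((max N 0 : ℤ):ℝ) := by exact_mod_cast le_max_left N 0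
      have h2 : ((max N 0 : ℤ):ℝ) ≤ A₂ := by exact_mod_cast le_of_lt hA₂
      linarith
    rw [div_lt_iff₀ q1pos] at hbig
    nlinarith [abs_nonneg ((A₂:ℝ)*u+B₂)]
  obtain ⟨a₁, b₁, c₁, k₁, ha₁, hb₁, hc₁, r1u, r1v, g1, g2, g3⟩ :=
    reduce A₁ B₁ C₁ (fun h => hA₁0 h.1) h1u h1v
  obtain ⟨a₂, b₂, c₂, k₂, ha₂, hb₂, hc₂, r2u, r2v, s1, s2, s3⟩ :=
    reduce A₂ B₂ C₂ (fun h => hA₂0 h.1) h2u h2v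
  have hdet2 : a₁*b₂ - a₂*b₁ ≠ 0 := by
    intro h
    apply hdet
    rw [g1, g2, s1, s2]
    calc (2^k₁*a₁)*(2^k₂*b₂) - (2^k₂*a₂)*(2^k₁*b₁) = 2^k₁*2^k₂*(a₁*b₂ - a₂*b₁) := by ring
    _ = 0 := by rw [h, mul_zero]
  exact descent u v δ hδ enemy _ a₁ b₁ c₁ a₂ b₂ c₂ ha₁ hb₁ hc₁ ha₂ hb₂ hc₂
    (le_trans r1u (by linarith)) (le_trans r1v (by linarith))
    (le_trans r2u (by linarith)) (le_trans r2v (by linarith)) hdet2 rfl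


open Classical in
noncomputable def Dfin (u v : ℝ) : Finset (ℝ × ℝ) := {(1,0), (0,1), (0,0), (u,v)}

open Classical in
noncomputable def Afin (u v : ℝ) : ℕ → Finset (ℝ × ℝ)
  | 0 => {0}
  | (t+1) => Finset.image₂ (fun d a => d + (2:ℝ)•a) (Dfin u v) (Afin u v t)

lemma mem_Dfin_iff (u v : ℝ) (a : ℝ×ℝ) : a ∈ Dfin u v ↔ a ∈ Duv u v := by
  simp [Dfin, Duv]

lemma card_Dfin (u v : ℝ) : (Dfin u v).card ≤ 4 := by
  classical
  refine le_trans (Finset.card_insert_le _ _) ?_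
  refine le_trans (Nat.add_le_add_right (Finset.card_insert_le _ _) 1) ?_
  refine le_trans (Nat.add_le_add_right (Nat.add_le_add_right (Finset.card_insert_le _ _) 1) 1) ?_
  simp

lemma card_Afin (u v : ℝ) (t : ℕ) : (Afin u v t).card ≤ 4^t := by
  induction t with
  | zero => simp [Afin]
  | succ t ih =>
    refine le_trans (Finset.card_image₂_le _ _ _) ?_
    calc (Dfin u v).card * (Afin u v t).card ≤ 4 * 4^t :=
          Nat.mul_le_mul (card_Dfin u v) ih
      _ = 4^(t+1) := by ring

lemma sum_mem_Afin (u v : ℝ) : ∀ (t : ℕ) (e : ℕ → ℝ×ℝ), (∀ j, j < t → e j ∈ Dfin u v) →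
    (∑ j ∈ Finset.range t, (2:ℝ)^j • e j) ∈ Afin u v t := by
  intro t
  induction t with
  | zero => intro e _; simp [Afin]
  | succ t ih =>
    intro e he
    have hrw : (∑ j ∈ Finset.range (t+1), (2:ℝ)^j • e j)
        = e 0 + (2:ℝ) • (∑ j ∈ Finset.range t, (2:ℝ)^j • e (j+1)) := by
      rw [Finset.sum_range_succ', Finset.smul_sum]
      simp only [pow_zero, one_smul]
      rw [add_comm]
      congr 1
      apply Finset.sum_congr rfl
      intro j _
      rw [smul_smul, ← pow_succ']
    rw [hrw]
    exact Finset.mem_image₂_of_mem (he 0 (by omega)) (ih _ (fun j hj => he (j+1) (by omega)))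


lemma iterX (u v : ℝ) (X : Set (ℝ×ℝ))
    (hX : X = ⋃ d ∈ Duv u v, (fun x => (2:ℝ)⁻¹ • (x + d)) '' X) :
    ∀ t : ℕ, X = ⋃ a ∈ Afin u v t, (fun y => ((2:ℝ)⁻¹)^t • (y + a)) '' X := by
  intro t
  induction t with
  | zero => simp [Afin]
  | succ t ih =>
    apply Set.Subset.antisymm
    · intro x hx
      rw [ih] at hx
      simp only [Set.mem_iUnion, exists_prop] at hx
      obtain ⟨a, ha, y, hy, rfl⟩ := hx
      rw [hX] at hy
      simp only [Set.mem_iUnion, exists_prop] at hy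
      obtain ⟨d, hd, z, hz, rfl⟩ := hy
      simp only [Set.mem_iUnion, exists_prop]
      refine ⟨d + (2:ℝ)•a, Finset.mem_image₂_of_mem ((mem_Dfin_iff u v d).2 hd) ha, z, hz, ?_⟩
      show ((2:ℝ)⁻¹)^(t+1) • (z + (d + (2:ℝ)•a)) = ((2:ℝ)⁻¹)^t • ((2:ℝ)⁻¹ • (z + d) + a)
      match_scalars <;> field_simp <;> ring
    · intro x hx
      simp only [Set.mem_iUnion, exists_prop] at hx
      obtain ⟨a', ha', z, hz, rfl⟩ := hx
      obtain ⟨d, hd, a, ha, rfl⟩ := Finset.mem_image₂.1 ha'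
      rw [ih]
      simp only [Set.mem_iUnion, exists_prop]
      refine ⟨a, ha, (2:ℝ)⁻¹ • (z + d), ?_, ?_⟩
      · rw [hX]
        simp only [Set.mem_iUnion, exists_prop]
        exact ⟨d, (mem_Dfin_iff u v d).1 hd, z, hz, rfl⟩
      · show ((2:ℝ)⁻¹)^t • (((2:ℝ)⁻¹ • (z + d)) + a) = ((2:ℝ)⁻¹)^(t+1) • (z + (d + (2:ℝ)•a))
        match_scalars <;> field_simp <;> ring


lemma image_eq_smul_vadd (t : ℕ) (a : ℝ×ℝ) (X : Set (ℝ×ℝ)) :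
    (fun y => ((2:ℝ)⁻¹)^t • (y + a)) '' X = ((2:ℝ)⁻¹)^t • (a +ᵥ X) := by
  ext z
  simp only [Set.mem_image, Set.mem_smul_set, Set.mem_vadd_set]
  constructor
  · rintro ⟨y, hy, rfl⟩
    exact ⟨a + y, ⟨y, hy, rfl⟩, by rw [add_comm a y]⟩
  · rintro ⟨q, ⟨y, hy, rfl⟩, rfl⟩
    refine ⟨y, hy, ?_⟩
    show ((2:ℝ)⁻¹)^t • (y + a) = ((2:ℝ)⁻¹)^t • (a + y)
    rw [add_comm y a]

lemma finrank2 : Module.finrank ℝ (ℝ×ℝ) = 2 := by simp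

lemma piece_vol (t : ℕ) (a : ℝ×ℝ) (X : Set (ℝ×ℝ)) :
    MeasureTheory.volume ((fun y => ((2:ℝ)⁻¹)^t • (y + a)) '' X)
      = ((4:ℝ≥0∞)⁻¹)^t * MeasureTheory.volume X := by
  rw [image_eq_smul_vadd, Measure.addHaar_smul, measure_vadd]
  congr 1
  rw [finrank2]
  have h1 : |(((2:ℝ)⁻¹)^t)^2| = ((4:ℝ)⁻¹)^t := by
    rw [abs_of_nonneg (by positivity), ← pow_mul,
      show (4:ℝ)⁻¹ = ((2:ℝ)⁻¹)^2 by norm_num, ← pow_mul, mul_comm]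
  rw [h1, ENNReal.ofReal_pow (by norm_num), ENNReal.ofReal_inv_of_pos (by norm_num)]
  norm_num

lemma vol_zero_aux (u v : ℝ)
    (X : Set (ℝ × ℝ)) (hXcpt : IsCompact X)
    (hX : X = ⋃ d ∈ Duv u v, (fun x => (2 : ℝ)⁻¹ • (x + d)) '' X)
    (hkey : ∀ δ : ℝ, 0 < δ → ∃ x ∈ Exp2 2 (delta2 (Duv u v)), x ≠ 0 ∧ ‖x‖ ≤ δ) :
    MeasureTheory.volume X = 0 := by
  by_contra h0
  set m := MeasureTheory.volume X with hm
  have hmfin : m ≠ ⊤ := hXcpt.measure_lt_top.ne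
  obtain ⟨U, hXU, hUopen, hUvol⟩ := exists_isOpen_lt_of_lt X (m + m)
    (ENNReal.lt_add_right hmfin h0)
  obtain ⟨ε, hεpos, hthick⟩ := hXcpt.exists_cthickening_subset_open hUopen hXU
  obtain ⟨x, hxE, hxne, hxnorm⟩ := hkey ε hεpos
  obtain ⟨t, ht1, dd, hdd, hxsum⟩ := hxE
  have hch : ∀ j : ℕ, ∃ p q : ℝ×ℝ, p ∈ Dfin u v ∧ q ∈ Dfin u v ∧
      (if j < t then dd j else 0) = p - q := by
    intro j
    by_cases hj : j < t
    · obtain ⟨p, hp, q, hq, hpq⟩ := hdd j hj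
      exact ⟨p, q, (mem_Dfin_iff u v p).2 hp, (mem_Dfin_iff u v q).2 hq, by simp [hj, hpq]⟩
    · refine ⟨(0,0), (0,0), ?_, ?_, by simp [hj]⟩ <;> simp [Dfin]
  choose e e' he he' heq using hch
  set a := ∑ j ∈ Finset.range t, (2:ℝ)^j • e j with hadef
  set b := ∑ j ∈ Finset.range t, (2:ℝ)^j • e' j with hbdef
  have hab : a - b = x := by
    rw [hxsum, hadef, hbdef, ← Finset.sum_sub_distrib]
    apply Finset.sum_congr rfl
    intro j hj
    rw [← smul_sub]
    have hq := heq j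
    rw [if_pos (Finset.mem_range.1 hj)] at hq
    rw [← hq]
    norm_num
  have haA : a ∈ Afin u v t := sum_mem_Afin u v t e (fun j _ => he j)
  have hbA : b ∈ Afin u v t := sum_mem_Afin u v t e' (fun j _ => he' j)
  have habne : a ≠ b := fun h => hxne (by rw [← hab, h, sub_self])
  classical
  set P : ℝ×ℝ → Set (ℝ×ℝ) := fun c => (fun y => ((2:ℝ)⁻¹)^t • (y + c)) '' X with hP
  have hPmeas : ∀ c, MeasurableSet (P c) := by
    intro c
    exact (hXcpt.image ((continuous_id.add continuous_const).const_smul (((2:ℝ)⁻¹)^t))).isClosed.measurableSet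
  have hPvol : ∀ c, MeasureTheory.volume (P c) = ((4:ℝ≥0∞)⁻¹)^t * m := fun c => piece_vol t c X
  have hcover : X ⊆ (P a ∪ P b) ∪ ⋃ c ∈ (Afin u v t) \ ({a, b} : Finset (ℝ×ℝ)), P c := by
    intro z hz
    rw [iterX u v X hX t] at hz
    simp only [Set.mem_iUnion, exists_prop] at hz
    obtain ⟨c, hc, hzc⟩ := hz
    by_cases hca : c = a
    · exact Or.inl (Or.inl (hca ▸ hzc))
    by_cases hcb : c = b
    · exact Or.inl (Or.inr (hcb ▸ hzc))
    refine Or.inr ?_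
    simp only [Set.mem_iUnion, exists_prop]
    exact ⟨c, Finset.mem_sdiff.2 ⟨hc, by simp [hca, hcb]⟩, hzc⟩
  set κ : ℝ≥0∞ := ((4:ℝ≥0∞)⁻¹)^t * m with hκ
  have hsubAB : ({a, b} : Finset (ℝ×ℝ)) ⊆ Afin u v t := by
    intro c hc
    rcases Finset.mem_insert.1 hc with rfl | hc
    · exact haA
    · rw [Finset.mem_singleton.1 hc]; exact hbA
  have hcardAB : ({a, b} : Finset (ℝ×ℝ)).card = 2 := by
    rw [Finset.card_insert_of_notMem (by simp [habne]), Finset.card_singleton]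
  have hkey2 : m + MeasureTheory.volume (P a ∩ P b) ≤ m := by
    have h1 : m ≤ MeasureTheory.volume (P a ∪ P b)
        + ∑ c ∈ (Afin u v t) \ ({a,b} : Finset (ℝ×ℝ)), MeasureTheory.volume (P c) := by
      calc m ≤ MeasureTheory.volume ((P a ∪ P b) ∪ ⋃ c ∈ (Afin u v t) \ ({a,b} : Finset (ℝ×ℝ)), P c) :=
            measure_mono hcover
      _ ≤ MeasureTheory.volume (P a ∪ P b)
            + MeasureTheory.volume (⋃ c ∈ (Afin u v t) \ ({a,b} : Finset (ℝ×ℝ)), P c) :=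
            measure_union_le _ _
      _ ≤ _ := by
            gcongr
            exact measure_biUnion_finset_le _ _
    have h2 : MeasureTheory.volume (P a ∪ P b) + MeasureTheory.volume (P a ∩ P b)
        = κ + κ := by
      rw [measure_union_add_inter _ (hPmeas b), hPvol a, hPvol b]
    have h3 : ∑ c ∈ (Afin u v t) \ ({a,b} : Finset (ℝ×ℝ)), MeasureTheory.volume (P c)
        = ((Afin u v t).card - 2 : ℕ) • κ := by
      rw [Finset.sum_congr rfl (fun c _ => hPvol c), Finset.sum_const, Finset.card_sdiff_of_subset hsubAB,
        hcardAB]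
    have h4 : m + MeasureTheory.volume (P a ∩ P b)
        ≤ (κ + κ) + ((Afin u v t).card - 2 : ℕ) • κ := by
      calc m + MeasureTheory.volume (P a ∩ P b)
          ≤ (MeasureTheory.volume (P a ∪ P b)
              + ∑ c ∈ (Afin u v t) \ ({a,b} : Finset (ℝ×ℝ)), MeasureTheory.volume (P c))
            + MeasureTheory.volume (P a ∩ P b) := by gcongr
      _ = (MeasureTheory.volume (P a ∪ P b) + MeasureTheory.volume (P a ∩ P b))
            + ∑ c ∈ (Afin u v t) \ ({a,b} : Finset (ℝ×ℝ)), MeasureTheory.volume (P c) := by ring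
      _ = (κ + κ) + ((Afin u v t).card - 2 : ℕ) • κ := by rw [h2, h3]
    have hcard2 : 2 ≤ (Afin u v t).card := by
      calc 2 = ({a,b} : Finset (ℝ×ℝ)).card := hcardAB.symm
      _ ≤ _ := Finset.card_le_card hsubAB
    have h5 : (κ + κ) + ((Afin u v t).card - 2 : ℕ) • κ = ((Afin u v t).card : ℕ) • κ := by
      obtain ⟨k, hk⟩ : ∃ k, (Afin u v t).card = k + 2 := ⟨(Afin u v t).card - 2, by omega⟩
      rw [hk]
      have hk2 : (k + 2) - 2 = k := by omega
      rw [hk2, add_nsmul, two_nsmul]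
      abel
    have h6 : ((Afin u v t).card : ℕ) • κ ≤ (4^t : ℕ) • κ := by
      rw [nsmul_eq_mul, nsmul_eq_mul]
      exact mul_le_mul_left (by exact_mod_cast Nat.cast_le.2 (card_Afin u v t)) κ
    have h7 : (4^t : ℕ) • κ = m := by
      rw [nsmul_eq_mul, hκ, ← mul_assoc]
      norm_num [← mul_pow]
      rw [ENNReal.mul_inv_cancel (by norm_num) (by norm_num), one_pow, one_mul]
    calc m + MeasureTheory.volume (P a ∩ P b)
        ≤ (κ + κ) + ((Afin u v t).card - 2 : ℕ) • κ := h4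
    _ = ((Afin u v t).card : ℕ) • κ := h5
    _ ≤ (4^t : ℕ) • κ := h6
    _ = m := h7
  have hint0 : MeasureTheory.volume (P a ∩ P b) = 0 := by
    by_contra hI
    exact lt_irrefl m (lt_of_lt_of_le (ENNReal.lt_add_right hmfin hI) hkey2)
  set w := b - a with hw
  have hsub2 : ((2:ℝ)⁻¹)^t • (a +ᵥ (X ∩ (w +ᵥ X))) ⊆ P a ∩ P b := by
    rintro z hz
    obtain ⟨y0, hy0, rfl⟩ := hz
    obtain ⟨s, hs, rfl⟩ := hy0
    obtain ⟨hs1, hs2⟩ := hs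
    obtain ⟨s2, hs2m, hws⟩ := hs2
    simp only [vadd_eq_add] at hws ⊢
    constructor
    · refine ⟨s, hs1, ?_⟩
      show ((2:ℝ)⁻¹)^t • (s + a) = ((2:ℝ)⁻¹)^t • (a + s)
      rw [add_comm s a]
    · refine ⟨s2, hs2m, ?_⟩
      show ((2:ℝ)⁻¹)^t • (s2 + b) = ((2:ℝ)⁻¹)^t • (a + s)
      congr 1
      rw [← hws, hw]
      abel
  have hXw0 : MeasureTheory.volume (X ∩ (w +ᵥ X)) = 0 := by
    have hv : MeasureTheory.volume (((2:ℝ)⁻¹)^t • (a +ᵥ (X ∩ (w +ᵥ X))))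
        ≤ MeasureTheory.volume (P a ∩ P b) := measure_mono hsub2
    rw [hint0] at hv
    have hv0 : MeasureTheory.volume (((2:ℝ)⁻¹)^t • (a +ᵥ (X ∩ (w +ᵥ X)))) = 0 := le_zero_iff.1 hv
    rw [Measure.addHaar_smul, measure_vadd] at hv0
    rcases mul_eq_zero.1 hv0 with h | h
    · exfalso
      rw [ENNReal.ofReal_eq_zero] at h
      have : (0:ℝ) < |(((2:ℝ)⁻¹)^t)^(Module.finrank ℝ (ℝ×ℝ))| := by positivity
      linarith
    · exact h
  have hwU : (w +ᵥ X) ⊆ U := by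
    rintro z ⟨y, hy, rfl⟩
    apply hthick
    apply Metric.mem_cthickening_of_dist_le _ y ε X hy
    have hd : dist (w +ᵥ y) y = ‖w‖ := by
      rw [vadd_eq_add, dist_eq_norm]
      simp
    rw [hd, hw]
    calc ‖b - a‖ = ‖a - b‖ := norm_sub_rev _ _
    _ = ‖x‖ := by rw [hab]
    _ ≤ ε := hxnorm
  have hsum2 : MeasureTheory.volume ((w +ᵥ X) ∪ X) + MeasureTheory.volume ((w +ᵥ X) ∩ X)
      = MeasureTheory.volume (w +ᵥ X) + m := measure_union_add_inter _ hXcpt.isClosed.measurableSet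
  rw [Set.inter_comm] at hXw0
  rw [hXw0, add_zero, measure_vadd] at hsum2
  have hle2 : MeasureTheory.volume ((w +ᵥ X) ∪ X) ≤ MeasureTheory.volume U :=
    measure_mono (Set.union_subset hwU hXU)
  rw [hsum2] at hle2
  exact lt_irrefl _ (lt_of_le_of_lt hle2 hUvol)


lemma key_pos (u v : ℝ) (hu : Irrational u) (δ : ℝ) (hδ : 0 < δ) :
    ∃ x ∈ Exp2 2 (delta2 (Duv u v)), x ≠ 0 ∧ ‖x‖ ≤ δ := by
  obtain ⟨A, B, C, hnb, hnz, hbu, hbv⟩ := main_exists u v hu δ hδ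
  refine ⟨((A:ℝ)*u+B, (A:ℝ)*v+C), rch_exp u v (rch_of_not_bad A B C hnb), ?_, ?_⟩
  · intro h0
    rw [Prod.ext_iff] at h0
    obtain ⟨h1, h2⟩ := h0
    simp only [Prod.fst_zero, Prod.snd_zero] at h1 h2
    apply hnz
    have hA : A = 0 := by
      by_contra hA
      exact irr_lin_ne hu hA h1
    refine ⟨hA, ?_, ?_⟩
    · subst hA; simp at h1; exact_mod_cast h1
    · subst hA; simp at h2; exact_mod_cast h2
  · rw [Prod.norm_def]
    apply max_le
    · simpa [Real.norm_eq_abs] using hbu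
    · simpa [Real.norm_eq_abs] using hbv

lemma mem_duv_swap {u v : ℝ} {a : ℝ×ℝ} (ha : a ∈ Duv v u) : a.swap ∈ Duv u v := by
  simp only [Duv, Set.mem_insert_iff, Set.mem_singleton_iff] at ha ⊢
  rcases ha with rfl | rfl | rfl | rfl <;> simp [Prod.swap_prod_mk]

lemma exp2_swap {u v : ℝ} {x : ℝ×ℝ} (h : x ∈ Exp2 2 (delta2 (Duv v u))) :
    x.swap ∈ Exp2 2 (delta2 (Duv u v)) := by
  obtain ⟨t, ht, d, hd, hsum⟩ := h
  refine ⟨t, ht, fun j => (d j).swap, ?_, ?_⟩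
  · intro j hj
    obtain ⟨a, ha, b, hb, hab⟩ := hd j hj
    exact ⟨a.swap, mem_duv_swap ha, b.swap, mem_duv_swap hb,
      by simp only [hab]; cases a; cases b; simp [Prod.ext_iff]⟩
  · subst hsum
    apply Prod.ext <;> simp [Prod.fst_sum, Prod.snd_sum]

lemma key2 (u v : ℝ) (hirr : Irrational u ∨ Irrational v) (δ : ℝ) (hδ : 0 < δ) :
    ∃ x ∈ Exp2 2 (delta2 (Duv u v)), x ≠ 0 ∧ ‖x‖ ≤ δ := by
  rcases hirr with hu | hv
  · exact key_pos u v hu δ hδ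
  · obtain ⟨x, hx, hne, hnorm⟩ := key_pos v u hv δ hδ
    refine ⟨x.swap, exp2_swap hx, ?_, ?_⟩
    · intro h; apply hne; cases x; simp [Prod.ext_iff] at h ⊢; tauto
    · rw [Prod.norm_def] at hnorm ⊢
      cases x; simpa [max_comm] using hnorm

lemma vol_zero (u v : ℝ) (hirr : Irrational u ∨ Irrational v)
    (X : Set (ℝ × ℝ)) (hXcpt : IsCompact X)
    (hX : X = ⋃ d ∈ ({(1,0), (0,1), (0,0), (u,v)} : Set (ℝ × ℝ)),
        (fun x => (2 : ℝ)⁻¹ • (x + d)) '' X) :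
    MeasureTheory.volume X = 0 :=
  vol_zero_aux u v X hXcpt hX (fun δ hδ => key2 u v hirr δ hδ)

end Stmt10

open Stmt10 in
/-- If `u` or `v` is irrational, then the attractor of
`{x ↦ (x+d)/2 : d ∈ D_S^{u,v}}` with `D_S^{u,v} = {(1,0),(0,1),(0,0),(u,v)}`
is a null set; more precisely the differenced radix expansion set
`E(2, Δ(D_S^{u,v}))` fails to be uniformly discrete. -/
theorem stmt_10 (u v : ℝ) (hirr : Irrational u ∨ Irrational v)
    (X : Set (ℝ × ℝ)) (hXne : X.Nonempty) (hXcpt : IsCompact X)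
    (hX : X = ⋃ d ∈ ({(1,0), (0,1), (0,0), (u,v)} : Set (ℝ × ℝ)),
        (fun x => (2 : ℝ)⁻¹ • (x + d)) '' X) :
    MeasureTheory.volume X = 0 ∧
    ∀ δ : ℝ, 0 < δ →
      ∃ x ∈ Exp2 2 (delta2 ({(1,0), (0,1), (0,0), (u,v)} : Set (ℝ × ℝ))),
        x ≠ 0 ∧ ‖x‖ ≤ δ := by
  constructor
  · exact vol_zero u v hirr X hXcpt hX
  · intro δ hδ
    exact Stmt10.key2 u v hirr δ hδ
end
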